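/- arXiv:2103.07906 — 3 statements merged into one kernel-verified Lean document; each statement's English description precedes it below -/
import Mathlib

section
/- Let γ ∈ (1/2,2], ν ∈ (0,1), δ ∈ (0,1), and let u be a smooth shear profile on the torus with maximal vanishing order j_m ≥ 1. Suppose λ ∈ ℝ satisfies min_{y∈𝕋} |λ − u(y)| ≥ δ ν^{(j_m+1)/(j_m+1+2γ)}, and let w ∈ H^{2γ}(𝕋;ℂ) solve ν(−Δ_y)^γ w + i(u(y)−λ)w = F with F ∈ L²(𝕋;ℂ). Then there is a constant C(δ^{−1}) > 0, depending only on δ^{−1}, such that ν^{1+(j_m+1)/(j_m+1+2γ)} ‖|∂_y|^γ w‖_{L²}² + ν^{2(j_m+1)/(j_m+1+2γ)} ‖w‖_{L²}² ≤ C(δ^{−1}) ‖F‖_{L²}². -/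
open MeasureTheory Real Complex

noncomputable section

/-- `ℓ`-th Fourier coefficient of a (2π-periodic) function on the torus `𝕋 = [-π, π]`. -/
def fc (f : ℝ → ℂ) (ℓ : ℤ) : ℂ :=
  ((2 * π : ℝ) : ℂ)⁻¹ * ∫ y in Set.Ioc (-(π : ℝ)) π, f y * Complex.exp (-Complex.I * (ℓ : ℂ) * (y : ℂ))

/-- membership in `L²(𝕋)`. -/
def MemL2 (f : ℝ → ℂ) : Prop :=
  MemLp f 2 (volume.restrict (Set.Ioc (-(π : ℝ)) π))

/-- square of the `L²(𝕋)` norm. -/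
def L2sq (f : ℝ → ℂ) : ℝ := ∫ y in Set.Ioc (-(π : ℝ)) π, ‖f y‖ ^ 2

/-- the `L²(𝕋)` norm. -/
def L2norm (f : ℝ → ℂ) : ℝ := Real.sqrt (L2sq f)

/-- square of the `L²(𝕋²)` norm. -/
def L2sq2 (f : ℝ → ℝ → ℂ) : ℝ :=
  ∫ x in Set.Ioc (-(π : ℝ)) π, ∫ y in Set.Ioc (-(π : ℝ)) π, ‖f x y‖ ^ 2

/-- the `L²(𝕋²)` norm. -/
def L2norm2 (f : ℝ → ℝ → ℂ) : ℝ := Real.sqrt (L2sq2 f)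

/-- `v = |∂_y|^γ f`: the Fourier multiplier `|ℓ|^γ`. -/
def IsFracDeriv (γ : ℝ) (f v : ℝ → ℂ) : Prop :=
  ∀ ℓ : ℤ, fc v ℓ = ((|(ℓ : ℝ)| ^ γ : ℝ) : ℂ) * fc f ℓ

/-- `v = (-Δ_y)^γ f`: the Fourier multiplier `|ℓ|^{2γ}`. -/
def IsFracLap (γ : ℝ) (f v : ℝ → ℂ) : Prop :=
  ∀ ℓ : ℤ, fc v ℓ = ((|(ℓ : ℝ)| ^ (2 * γ) : ℝ) : ℂ) * fc f ℓ

/-- membership in the Sobolev space `H^s(𝕋)`. -/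
def MemHs (s : ℝ) (f : ℝ → ℂ) : Prop :=
  MemL2 f ∧ Summable fun ℓ : ℤ => (1 + |(ℓ : ℝ)| ^ (2 * s)) * ‖fc f ℓ‖ ^ 2

/-- almost everywhere on the torus `[-π,π]`. -/
def TorusAE (P : ℝ → Prop) : Prop :=
  ∀ᵐ y ∂(volume.restrict (Set.Ioc (-(π : ℝ)) π)), P y

/-- the logarithmic-loss exponent `β(γ) = 8γ(1-γ) 𝟙_{γ∈(1/2,1)}`. -/
def betaExp (γ : ℝ) : ℝ := if γ < 1 then 8 * γ * (1 - γ) else 0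

/-- the exponent `α(γ) = (1-γ) 𝟙_{γ∈(1/2,1)}`. -/
def alphaExp (γ : ℝ) : ℝ := if γ < 1 then 1 - γ else 0

/-- the enhanced-dissipation exponent `d = (j+1)/(j+1+2γ)`. -/
def dExp (j : ℕ) (γ : ℝ) : ℝ := ((j : ℝ) + 1) / ((j : ℝ) + 1 + 2 * γ)

/-- A smooth shear profile on the torus `𝕋 = [-π,π]` with finitely many critical points
`y_1^*, …, y_N^*`, of finite vanishing orders `j_1, …, j_N`, satisfying the non-degeneracy
assumption `C₁⁻¹ |y - y_i^*|^{j_i} ≤ |u'(y)| ≤ C₁ |y - y_i^*|^{j_i}` near each critical point. -/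
structure ShearProfile where
  u : ℝ → ℝ
  smooth : ContDiff ℝ (⊤ : ℕ∞) u
  periodic : Function.Periodic u (2 * π)
  N : ℕ
  Npos : 0 < N
  ys : Fin N → ℝ
  ys_mem : ∀ i, ys i ∈ Set.Ioc (-(π : ℝ)) π
  ys_crit : ∀ i, deriv u (ys i) = 0
  crit_sub : ∀ y ∈ Set.Ioc (-(π : ℝ)) π, deriv u y = 0 → ∃ i, y = ys i
  js : Fin N → ℕ
  js_pos : ∀ i, 1 ≤ js i
  js_vanish : ∀ i, ∀ ℓ : ℕ, 1 ≤ ℓ → ℓ ≤ js i → iteratedDeriv ℓ u (ys i) = 0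
  js_nonvanish : ∀ i, iteratedDeriv (js i + 1) u (ys i) ≠ 0
  R : Fin N → ℝ
  R_mem : ∀ i, R i ∈ Set.Ioo (0 : ℝ) (π / 10)
  C1 : ℝ
  C1_gt : 1 < C1
  deriv_lower : ∀ i, ∀ y ∈ Metric.ball (ys i) (R i),
    C1⁻¹ * |y - ys i| ^ (js i) ≤ |deriv u y|
  deriv_upper : ∀ i, ∀ y ∈ Metric.ball (ys i) (R i),
    |deriv u y| ≤ C1 * |y - ys i| ^ (js i)

/-- the maximal vanishing order `j_m` of a shear profile. -/
def ShearProfile.jm (U : ShearProfile) : ℕ := Finset.univ.sup U.js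

end


/-! ### Auxiliary lemmas -/

noncomputable section AuxResolvent
open Set AddCircle

instance fact_two_pi_pos : Fact ((0:ℝ) < 2 * π) := ⟨by positivity⟩

/-- transfer of Bochner integrals from the circle to the interval. -/
lemma integral_liftIoc {E : Type*} [NormedAddCommGroup E] [NormedSpace ℝ E] (h : ℝ → E) :
    (∫ x : AddCircle (2 * π), AddCircle.liftIoc (2 * π) (-π) h x)
      = ∫ y in Set.Ioc (-(π : ℝ)) π, h y := by
  have h2 : -(π:ℝ) + 2 * π = π := by ring
  rw [← AddCircle.integral_preimage (2 * π) (-π) (AddCircle.liftIoc (2 * π) (-π) h), h2]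
  refine setIntegral_congr_fun measurableSet_Ioc fun x hx => ?_
  exact AddCircle.liftIoc_coe_apply (by rw [h2]; exact hx)

/-- transfer of lower integrals from the circle to the interval. -/
lemma lintegral_liftIoc (h : ℝ → ENNReal) :
    (∫⁻ x : AddCircle (2 * π), AddCircle.liftIoc (2 * π) (-π) h x)
      = ∫⁻ y in Set.Ioc (-(π : ℝ)) π, h y := by
  have h2 : -(π:ℝ) + 2 * π = π := by ring
  rw [← AddCircle.lintegral_preimage (2 * π) (-π) (AddCircle.liftIoc (2 * π) (-π) h), h2]
  refine setLIntegral_congr_fun measurableSet_Ioc (fun x hx => ?_)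
  exact AddCircle.liftIoc_coe_apply (by rw [h2]; exact hx)

lemma aesm_liftIoc {f : ℝ → ℂ}
    (hf : AEStronglyMeasurable f (volume.restrict (Set.Ioc (-(π : ℝ)) π))) :
    AEStronglyMeasurable (AddCircle.liftIoc (2 * π) (-π) f)
      (volume : Measure (AddCircle (2 * π))) := by
  have h2 : -(π:ℝ) + 2 * π = π := by ring
  obtain ⟨g, hg, hfg⟩ := hf
  have hq : Measurable (fun x : AddCircle (2 * π) =>
      ((AddCircle.equivIoc (2 * π) (-π) x : Set.Ioc (-π) (-π + 2 * π)) : ℝ)) :=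
    measurable_subtype_coe.comp (AddCircle.measurableEquivIoc (2 * π) (-π)).measurable
  refine ⟨AddCircle.liftIoc (2 * π) (-π) g, ?_, ?_⟩
  · exact hg.comp_measurable hq
  · obtain ⟨M, hNM, hMmeas, hM0⟩ := exists_measurable_superset_of_null (ae_iff.mp hfg)
    have key : (volume : Measure (AddCircle (2 * π)))
        ((fun x : AddCircle (2 * π) =>
          ((AddCircle.equivIoc (2 * π) (-π) x : Set.Ioc (-π) (-π + 2 * π)) : ℝ)) ⁻¹' M) = 0 := by
      rw [← (AddCircle.measurePreserving_mk (2 * π) (-π)).map_eq,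
        Measure.map_apply AddCircle.measurable_mk' (hq hMmeas)]
      have hmeas2 : MeasurableSet (((↑) : ℝ → AddCircle (2 * π)) ⁻¹'
          ((fun x : AddCircle (2 * π) =>
            ((AddCircle.equivIoc (2 * π) (-π) x : Set.Ioc (-π) (-π + 2 * π)) : ℝ)) ⁻¹' M)) :=
        (hq.comp AddCircle.measurable_mk') hMmeas
      rw [Measure.restrict_apply hmeas2]
      have hM0' : volume (M ∩ Set.Ioc (-(π:ℝ)) π) = 0 := by
        rw [← Measure.restrict_apply hMmeas]; exact hM0
      refine measure_mono_null (fun y hy => ?_) hM0'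
      obtain ⟨hy1, hy2⟩ := hy
      constructor
      · have hco : ((AddCircle.equivIoc (2 * π) (-π) (y : AddCircle (2 * π)) :
            Set.Ioc (-π) (-π + 2 * π)) : ℝ) = y :=
          AddCircle.liftIoc_coe_apply (p := 2 * π) (a := -π) (f := fun z : ℝ => z)
            (x := y) hy2
        rwa [Set.mem_preimage, Set.mem_preimage, hco] at hy1
      · exact ⟨hy2.1, by linarith [hy2.2]⟩
    refine (ae_iff).mpr (measure_mono_null (fun x hx => ?_) key)
    simp only [Set.mem_setOf_eq] at hx ⊢
    by_contra hxM
    exact hx (by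
      have : f ((AddCircle.equivIoc (2 * π) (-π) x : Set.Ioc (-π) (-π + 2 * π)) : ℝ)
          = g ((AddCircle.equivIoc (2 * π) (-π) x : Set.Ioc (-π) (-π + 2 * π)) : ℝ) := by
        by_contra hne
        exact hxM (hNM hne)
      exact this)

lemma memLp_liftIoc {f : ℝ → ℂ}
    (hf : MemLp f 2 (volume.restrict (Set.Ioc (-(π : ℝ)) π))) :
    MemLp (AddCircle.liftIoc (2 * π) (-π) f) 2
      (@haarAddCircle (2 * π) fact_two_pi_pos) := by
  have hvol : MemLp (AddCircle.liftIoc (2 * π) (-π) f) 2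
      (volume : Measure (AddCircle (2 * π))) := by
    refine ⟨aesm_liftIoc hf.1, ?_⟩
    have he : eLpNorm (AddCircle.liftIoc (2 * π) (-π) f) 2 (volume : Measure (AddCircle (2 * π)))
        = eLpNorm f 2 (volume.restrict (Set.Ioc (-(π : ℝ)) π)) := by
      rw [eLpNorm_eq_lintegral_rpow_enorm_toReal two_ne_zero ENNReal.ofNat_ne_top,
        eLpNorm_eq_lintegral_rpow_enorm_toReal two_ne_zero ENNReal.ofNat_ne_top]
      congr 1
      have : (fun x : AddCircle (2 * π) =>
          (‖AddCircle.liftIoc (2 * π) (-π) f x‖ₑ : ENNReal) ^ (2 : ENNReal).toReal)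
          = AddCircle.liftIoc (2 * π) (-π)
            (fun y => (‖f y‖ₑ : ENNReal) ^ (2 : ENNReal).toReal) := rfl
      rw [this, lintegral_liftIoc]
    rw [he]
    exact hf.2
  refine hvol.mono_measure ?_
  intro s
  rw [AddCircle.volume_eq_smul_haarAddCircle, Measure.smul_apply, smul_eq_mul]
  calc (haarAddCircle : Measure (AddCircle (2*π))) s
      = 1 * haarAddCircle s := (one_mul _).symm
    _ ≤ ENNReal.ofReal (2 * π) * haarAddCircle s := by
        refine mul_le_mul_left ?_ _
        rw [show (1 : ENNReal) = ENNReal.ofReal 1 from (ENNReal.ofReal_one).symm]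
        exact ENNReal.ofReal_le_ofReal (by nlinarith [pi_gt_three])

lemma fourierCoeff_liftIoc_eq_fc (f : ℝ → ℂ) (n : ℤ) :
    fourierCoeff (AddCircle.liftIoc (2 * π) (-π) f) n = fc f n := by
  have h2 : -(π:ℝ) + 2 * π = π := by ring
  rw [fourierCoeff_eq_intervalIntegral _ n (-π), h2,
    intervalIntegral.integral_of_le (by linarith [pi_pos] : -(π:ℝ) ≤ π)]
  have hcongr : ∫ x in Set.Ioc (-(π:ℝ)) π,
        (fourier (-n) (x : AddCircle (2 * π))) • AddCircle.liftIoc (2 * π) (-π) f (x : AddCircle (2*π))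
      = ∫ y in Set.Ioc (-(π:ℝ)) π, f y * Complex.exp (-Complex.I * (n : ℂ) * (y : ℂ)) := by
    refine setIntegral_congr_fun measurableSet_Ioc fun x hx => ?_
    have hx' : x ∈ Set.Ioc (-(π:ℝ)) (-π + 2 * π) := by rw [h2]; exact hx
    rw [AddCircle.liftIoc_coe_apply hx', fourier_coe_apply, smul_eq_mul, mul_comm]
    congr 1
    refine congrArg Complex.exp ?_
    have hπ : ((π:ℝ):ℂ) ≠ 0 := Complex.ofReal_ne_zero.mpr pi_ne_zero
    push_cast
    rw [div_eq_iff (by simpa using hπ : (2 * (π:ℂ)) ≠ 0)]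
    ring
  rw [hcongr, fc, Complex.real_smul]
  push_cast
  rw [one_div]

/-- `L²(haar)` inner product of the lifts equals `(2π)⁻¹ ∫ conj f * g`. -/
lemma inner_liftLp {f g : ℝ → ℂ}
    (hf : MemLp f 2 (volume.restrict (Set.Ioc (-(π : ℝ)) π)))
    (hg : MemLp g 2 (volume.restrict (Set.Ioc (-(π : ℝ)) π))) :
    (inner ℂ ((memLp_liftIoc hf).toLp _) ((memLp_liftIoc hg).toLp _) : ℂ)
      = (((2 * π : ℝ))⁻¹ : ℂ) *
        ∫ y in Set.Ioc (-(π : ℝ)) π, (starRingEnd ℂ) (f y) * g y := by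
  rw [MeasureTheory.L2.inner_def]
  have step1 : (∫ a, (inner ℂ (((memLp_liftIoc hf).toLp _ : Lp ℂ 2 (@haarAddCircle (2*π) _)) a)
        (((memLp_liftIoc hg).toLp _ : Lp ℂ 2 (@haarAddCircle (2*π) _)) a) : ℂ)
        ∂(@haarAddCircle (2*π) fact_two_pi_pos))
      = ∫ a, (starRingEnd ℂ) (AddCircle.liftIoc (2 * π) (-π) f a) *
          (AddCircle.liftIoc (2 * π) (-π) g a) ∂(@haarAddCircle (2*π) fact_two_pi_pos) := by
    refine integral_congr_ae ?_
    filter_upwards [MemLp.coeFn_toLp (memLp_liftIoc hf), MemLp.coeFn_toLp (memLp_liftIoc hg)]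
      with a h1 h2
    rw [h1, h2, RCLike.inner_apply']
  rw [step1]
  have step2 : (∫ a, (starRingEnd ℂ) (AddCircle.liftIoc (2 * π) (-π) f a) *
          (AddCircle.liftIoc (2 * π) (-π) g a) ∂(@volume (AddCircle (2*π)) _))
      = (2 * π) • ∫ a, (starRingEnd ℂ) (AddCircle.liftIoc (2 * π) (-π) f a) *
          (AddCircle.liftIoc (2 * π) (-π) g a) ∂(@haarAddCircle (2*π) fact_two_pi_pos) := by
    rw [AddCircle.volume_eq_smul_haarAddCircle, integral_smul_measure,
      ENNReal.toReal_ofReal (by positivity : (0:ℝ) ≤ 2 * π)]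
  have step3 : (∫ a, (starRingEnd ℂ) (AddCircle.liftIoc (2 * π) (-π) f a) *
          (AddCircle.liftIoc (2 * π) (-π) g a) ∂(@volume (AddCircle (2*π)) _))
      = ∫ y in Set.Ioc (-(π : ℝ)) π, (starRingEnd ℂ) (f y) * g y := by
    rw [show (fun a => (starRingEnd ℂ) (AddCircle.liftIoc (2 * π) (-π) f a) *
          (AddCircle.liftIoc (2 * π) (-π) g a))
        = AddCircle.liftIoc (2 * π) (-π) (fun y => (starRingEnd ℂ) (f y) * g y) from rfl]
    exact integral_liftIoc _
  rw [← step3, step2, Complex.real_smul, ← mul_assoc]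
  rw [show ((((2 * π : ℝ))⁻¹ : ℂ) * ((2 * π : ℝ) : ℂ)) = 1 by
    rw [inv_mul_cancel₀]; exact Complex.ofReal_ne_zero.mpr (by positivity)]
  rw [one_mul]

lemma repr_liftLp {f : ℝ → ℂ}
    (hf : MemLp f 2 (volume.restrict (Set.Ioc (-(π : ℝ)) π))) (n : ℤ) :
    fourierBasis.repr ((memLp_liftIoc hf).toLp _) n = fc f n := by
  rw [fourierBasis_repr]
  have : fourierCoeff (((memLp_liftIoc hf).toLp _ : Lp ℂ 2 (@haarAddCircle (2*π) _)) : AddCircle (2*π) → ℂ) n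
      = fourierCoeff (AddCircle.liftIoc (2 * π) (-π) f) n := by
    refine integral_congr_ae ?_
    filter_upwards [MemLp.coeFn_toLp (memLp_liftIoc hf)] with a ha
    rw [ha]
  rw [this, fourierCoeff_liftIoc_eq_fc]

lemma conj_mul_self (z : ℂ) : (starRingEnd ℂ) z * z = ((‖z‖ ^ 2 : ℝ) : ℂ) := by
  rw [mul_comm, Complex.mul_conj]
  norm_cast
  rw [Complex.normSq_eq_norm_sq]

/-- `∫ conj f * f = L2sq f`. -/
lemma integral_conj_self (f : ℝ → ℂ) :
    (∫ y in Set.Ioc (-(π : ℝ)) π, (starRingEnd ℂ) (f y) * f y) = ((L2sq f : ℝ) : ℂ) := by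
  simp_rw [conj_mul_self]
  rw [L2sq]
  exact integral_ofReal

/-- norm of the `toLp` element over the interval. -/
lemma norm_toLp_eq {f : ℝ → ℂ}
    (hf : MemLp f 2 (volume.restrict (Set.Ioc (-(π : ℝ)) π))) :
    ‖hf.toLp f‖ = Real.sqrt (L2sq f) := by
  have h1 : (inner ℂ (hf.toLp f) (hf.toLp f) : ℂ) = ((L2sq f : ℝ) : ℂ) := by
    rw [MeasureTheory.L2.inner_def, ← integral_conj_self f]
    refine integral_congr_ae ?_
    filter_upwards [hf.coeFn_toLp] with y h1
    rw [h1, RCLike.inner_apply']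
  have h2 : ‖hf.toLp f‖ ^ 2 = L2sq f := by
    rw [norm_sq_eq_re_inner (𝕜 := ℂ), h1]
    simp
  rw [← h2, Real.sqrt_sq (norm_nonneg _)]

/-- the key identity: `∫ conj w * Λw = L2sq Dw`. -/
lemma integral_conj_mul_fracLap {γ : ℝ} {w Λw Dw : ℝ → ℂ}
    (hw : MemLp w 2 (volume.restrict (Set.Ioc (-(π : ℝ)) π)))
    (hΛ : MemLp Λw 2 (volume.restrict (Set.Ioc (-(π : ℝ)) π)))
    (hD : MemLp Dw 2 (volume.restrict (Set.Ioc (-(π : ℝ)) π)))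
    (hfl : ∀ ℓ : ℤ, fc Λw ℓ = ((|(ℓ : ℝ)| ^ (2 * γ) : ℝ) : ℂ) * fc w ℓ)
    (hfd : ∀ ℓ : ℤ, fc Dw ℓ = ((|(ℓ : ℝ)| ^ γ : ℝ) : ℂ) * fc w ℓ) :
    (∫ y in Set.Ioc (-(π : ℝ)) π, (starRingEnd ℂ) (w y) * Λw y) = ((L2sq Dw : ℝ) : ℂ) := by
  have key : (inner ℂ ((memLp_liftIoc hw).toLp _) ((memLp_liftIoc hΛ).toLp _) : ℂ)
      = (inner ℂ ((memLp_liftIoc hD).toLp _) ((memLp_liftIoc hD).toLp _) : ℂ) := by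
    rw [← LinearIsometryEquiv.inner_map_map fourierBasis.repr
        ((memLp_liftIoc hw).toLp _) ((memLp_liftIoc hΛ).toLp _),
      ← LinearIsometryEquiv.inner_map_map fourierBasis.repr
        ((memLp_liftIoc hD).toLp _) ((memLp_liftIoc hD).toLp _),
      lp.inner_eq_tsum, lp.inner_eq_tsum]
    refine tsum_congr fun i => ?_
    rw [RCLike.inner_apply', RCLike.inner_apply', repr_liftLp hw, repr_liftLp hΛ,
      repr_liftLp hD, hfl, hfd]
    have hsq : (|(i : ℝ)| ^ γ) * (|(i : ℝ)| ^ γ) = |(i : ℝ)| ^ (2 * γ) := by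
      rw [show (2 * γ) = γ * 2 by ring, Real.rpow_mul (abs_nonneg _),
        show ((2 : ℝ)) = ((2 : ℕ) : ℝ) by norm_num, Real.rpow_natCast, pow_two]
    simp only [map_mul, Complex.conj_ofReal]
    rw [← hsq]
    push_cast
    ring
  rw [inner_liftLp hw hΛ, inner_liftLp hD hD, integral_conj_self] at key
  have h2pi : (((2 * π : ℝ))⁻¹ : ℂ) ≠ 0 := by
    simp only [ne_eq, inv_eq_zero, Complex.ofReal_eq_zero]
    positivity
  exact mul_left_cancel₀ h2pi key

end AuxResolvent

/-- Resolvent estimate when the spectral parameter `λ` is away from the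
range of the shear profile: `min_y |λ - u(y)| ≥ δ ν^{(j_m+1)/(j_m+1+2γ)}`. -/
theorem resolvent_estimate_away_from_range
    (δ : ℝ) (hδ : δ ∈ Set.Ioo (0 : ℝ) 1) :
    ∃ C > (0 : ℝ),
      ∀ γ ∈ Set.Ioc (1 / 2 : ℝ) 2, ∀ ν ∈ Set.Ioo (0 : ℝ) 1,
      ∀ U : ShearProfile, 1 ≤ U.jm →
      ∀ lam : ℝ,
        (∀ y : ℝ, δ * ν ^ dExp U.jm γ ≤ |lam - U.u y|) →
      ∀ w Λw Dw F : ℝ → ℂ,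
        MemHs (2 * γ) w → Function.Periodic w (2 * π) →
        MemL2 Λw → MemL2 Dw → MemL2 F →
        IsFracLap γ w Λw → IsFracDeriv γ w Dw →
        -- the resolvent equation ν(-Δ_y)^γ w + i(u(y)-λ)w = F
        TorusAE (fun y =>
          (ν : ℂ) * Λw y + Complex.I * ((U.u y : ℂ) - (lam : ℂ)) * w y = F y) →
        ν ^ (1 + dExp U.jm γ) * L2sq Dw + ν ^ (2 * dExp U.jm γ) * L2sq w
          ≤ C * L2sq F := by
  refine ⟨δ⁻¹ + δ⁻¹ * δ⁻¹, by have := hδ.1; positivity, ?_⟩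
  intro γ hγ ν hν U hjm lam hlam w Λw Dw F hw hper hΛ hD hF hfl hfd hEq
  have hδ0 : 0 < δ := hδ.1
  have hν0 : 0 < ν := hν.1
  set μT := volume.restrict (Set.Ioc (-(π : ℝ)) π) with hμT
  have hw2 : MemLp w 2 μT := hw.1
  have hΛ2 : MemLp Λw 2 μT := hΛ
  have hD2 : MemLp Dw 2 μT := hD
  have hF2 : MemLp F 2 μT := hF
  set d : ℝ := dExp U.jm γ with hd
  have hpd : 0 < ν ^ d := Real.rpow_pos_of_pos hν0 d
  set A := L2sq Dw with hA
  set B := L2sq w with hB'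
  set Φ := L2sq F with hΦ'
  have hA0 : 0 ≤ A := integral_nonneg fun y => by positivity
  have hB0 : 0 ≤ B := integral_nonneg fun y => by positivity
  have hΦ0 : 0 ≤ Φ := integral_nonneg fun y => by positivity
  -- integrability facts
  have hsq : Integrable (fun y => ‖w y‖ ^ 2) μT := by
    have h' := hw2.integrable_norm_rpow two_ne_zero ENNReal.ofNat_ne_top
    have h22 : ((2 : ENNReal)).toReal = ((2 : ℕ) : ℝ) := by norm_num
    rw [h22] at h'
    simpa [Real.rpow_natCast] using h'
  obtain ⟨C0, hC0⟩ : ∃ C0, ∀ y ∈ Set.Icc (-(π:ℝ)) π, ‖U.u y - lam‖ ≤ C0 :=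
    IsCompact.exists_bound_of_continuousOn isCompact_Icc
      ((U.smooth.continuous.sub continuous_const).continuousOn)
  have hmul : Integrable (fun y => (U.u y - lam) * ‖w y‖ ^ 2) μT := by
    refine Integrable.bdd_mul (c := C0) hsq
      ((U.smooth.continuous.sub continuous_const).aestronglyMeasurable) ?_
    refine (ae_restrict_iff' measurableSet_Ioc).2
      (Filter.Eventually.of_forall fun y hy => hC0 y (Set.Ioc_subset_Icc_self hy))
  set J : ℝ := ∫ y in Set.Ioc (-(π:ℝ)) π, (U.u y - lam) * ‖w y‖ ^ 2 with hJ
  -- the basic identity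
  have hI1 : (∫ y in Set.Ioc (-(π:ℝ)) π, (starRingEnd ℂ) (w y) * Λw y) = ((A : ℝ) : ℂ) :=
    integral_conj_mul_fracLap hw2 hΛ2 hD2 hfl hfd
  have hint1 : Integrable (fun y => (starRingEnd ℂ) (w y) * Λw y) μT := by
    have h' := MeasureTheory.L2.integrable_inner (𝕜 := ℂ) (hw2.toLp w) (hΛ2.toLp Λw)
    refine h'.congr ?_
    filter_upwards [hw2.coeFn_toLp, hΛ2.coeFn_toLp] with y h1 h2
    rw [h1, h2, RCLike.inner_apply']
  have hint2 : Integrable (fun y => Complex.I * (((U.u y - lam) * ‖w y‖ ^ 2 : ℝ) : ℂ)) μT :=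
    (hmul.ofReal).const_mul _
  have hEq' : ∀ᵐ y ∂μT,
      (ν : ℂ) * Λw y + Complex.I * ((U.u y : ℂ) - (lam : ℂ)) * w y = F y := hEq
  have hptwise : ∀ᵐ y ∂μT, (starRingEnd ℂ) (w y) * F y
      = (ν:ℂ) * ((starRingEnd ℂ) (w y) * Λw y)
        + Complex.I * (((U.u y - lam) * ‖w y‖ ^ 2 : ℝ) : ℂ) := by
    filter_upwards [hEq'] with y hy
    rw [← hy]
    have hc := conj_mul_self (w y)
    push_cast at hc ⊢
    linear_combination (Complex.I * ((U.u y : ℂ) - (lam : ℂ))) * hc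
  have hS : (∫ y in Set.Ioc (-(π:ℝ)) π, (starRingEnd ℂ) (w y) * F y)
      = (ν:ℂ) * ((A : ℝ) : ℂ) + Complex.I * ((J : ℝ) : ℂ) := by
    rw [integral_congr_ae hptwise, integral_add (hint1.const_mul _) hint2,
      integral_const_mul, integral_const_mul, hI1]
    congr 1
    rw [hJ]
    exact congrArg (fun z => Complex.I * z) integral_ofReal
  have hinner : (inner ℂ (hw2.toLp w) (hF2.toLp F) : ℂ)
      = ∫ y in Set.Ioc (-(π:ℝ)) π, (starRingEnd ℂ) (w y) * F y := by
    rw [MeasureTheory.L2.inner_def]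
    refine integral_congr_ae ?_
    filter_upwards [hw2.coeFn_toLp, hF2.coeFn_toLp] with y h1 h2
    rw [h1, h2, RCLike.inner_apply']
  have hCS : ‖(ν:ℂ) * ((A : ℝ) : ℂ) + Complex.I * ((J : ℝ) : ℂ)‖
      ≤ Real.sqrt B * Real.sqrt Φ := by
    rw [← hS, ← hinner]
    calc ‖(inner ℂ (hw2.toLp w) (hF2.toLp F) : ℂ)‖
        ≤ ‖hw2.toLp w‖ * ‖hF2.toLp F‖ := norm_inner_le_norm _ _
      _ = Real.sqrt B * Real.sqrt Φ := by rw [norm_toLp_eq hw2, norm_toLp_eq hF2]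
  have hre : ((ν:ℂ) * ((A : ℝ) : ℂ) + Complex.I * ((J : ℝ) : ℂ)).re = ν * A := by simp
  have him : ((ν:ℂ) * ((A : ℝ) : ℂ) + Complex.I * ((J : ℝ) : ℂ)).im = J := by simp
  have h1 : ν * A ≤ Real.sqrt B * Real.sqrt Φ := by
    calc ν * A = ((ν:ℂ) * ((A : ℝ) : ℂ) + Complex.I * ((J : ℝ) : ℂ)).re := hre.symm
      _ ≤ |((ν:ℂ) * ((A : ℝ) : ℂ) + Complex.I * ((J : ℝ) : ℂ)).re| := le_abs_self _
      _ ≤ ‖(ν:ℂ) * ((A : ℝ) : ℂ) + Complex.I * ((J : ℝ) : ℂ)‖ :=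
          Complex.abs_re_le_norm _
      _ = ‖(ν:ℂ) * ((A : ℝ) : ℂ) + Complex.I * ((J : ℝ) : ℂ)‖ := rfl
      _ ≤ Real.sqrt B * Real.sqrt Φ := hCS
  have hJb : |J| ≤ Real.sqrt B * Real.sqrt Φ := by
    calc |J| = |((ν:ℂ) * ((A : ℝ) : ℂ) + Complex.I * ((J : ℝ) : ℂ)).im| := by rw [him]
      _ ≤ ‖(ν:ℂ) * ((A : ℝ) : ℂ) + Complex.I * ((J : ℝ) : ℂ)‖ :=
          Complex.abs_im_le_norm _
      _ = ‖(ν:ℂ) * ((A : ℝ) : ℂ) + Complex.I * ((J : ℝ) : ℂ)‖ := rfl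
      _ ≤ Real.sqrt B * Real.sqrt Φ := hCS
  -- sign dichotomy
  have hδν : 0 < δ * ν ^ d := by positivity
  have hne : ∀ y : ℝ, U.u y - lam ≠ 0 := by
    intro y hy0
    have := hlam y
    rw [show lam - U.u y = -(U.u y - lam) by ring, hy0] at this
    simp at this
    linarith
  have hsign : (∀ y : ℝ, δ * ν ^ d ≤ U.u y - lam) ∨ (∀ y : ℝ, δ * ν ^ d ≤ lam - U.u y) := by
    by_cases hpos : ∀ y : ℝ, 0 < U.u y - lam
    · left
      intro y
      have := hlam y
      rwa [show lam - U.u y = -(U.u y - lam) by ring, abs_neg, abs_of_pos (hpos y)] at this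
    · right
      push_neg at hpos
      obtain ⟨y₀, hy₀⟩ := hpos
      have hy₀' : U.u y₀ - lam < 0 := lt_of_le_of_ne hy₀ (hne y₀)
      have hallneg : ∀ y : ℝ, U.u y - lam < 0 := by
        intro y
        by_contra hge
        push_neg at hge
        have hy' : 0 < U.u y - lam := lt_of_le_of_ne hge (Ne.symm (hne y))
        have hv : ContinuousOn (fun z => U.u z - lam) (Set.uIcc y₀ y) :=
          (U.smooth.continuous.sub continuous_const).continuousOn
        have h0mem : (0:ℝ) ∈ Set.uIcc (U.u y₀ - lam) (U.u y - lam) :=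
          Set.mem_uIcc.2 (Or.inl ⟨hy₀'.le, hy'.le⟩)
        obtain ⟨c, _, hc⟩ := intermediate_value_uIcc hv h0mem
        exact hne c hc
      intro y
      have := hlam y
      rwa [abs_of_pos (by linarith [hallneg y] : 0 < lam - U.u y)] at this
  have hJd : δ * ν ^ d * B ≤ |J| := by
    have hBint : δ * ν ^ d * B = ∫ y in Set.Ioc (-(π:ℝ)) π, δ * ν ^ d * ‖w y‖ ^ 2 := by
      rw [integral_const_mul, hB']
      rfl
    rcases hsign with hs | hs
    · have hmono : (∫ y in Set.Ioc (-(π:ℝ)) π, δ * ν ^ d * ‖w y‖ ^ 2) ≤ J :=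
        integral_mono (hsq.const_mul _) hmul
          (fun y => mul_le_mul_of_nonneg_right (hs y) (by positivity))
      calc δ * ν ^ d * B ≤ J := by rw [hBint]; exact hmono
        _ ≤ |J| := le_abs_self J
    · have hmono : (∫ y in Set.Ioc (-(π:ℝ)) π, δ * ν ^ d * ‖w y‖ ^ 2)
          ≤ ∫ y in Set.Ioc (-(π:ℝ)) π, (lam - U.u y) * ‖w y‖ ^ 2 := by
        refine integral_mono (hsq.const_mul _) ?_
          (fun y => mul_le_mul_of_nonneg_right (hs y) (by positivity))
        have : (fun y => (lam - U.u y) * ‖w y‖ ^ 2)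
            = fun y => -((U.u y - lam) * ‖w y‖ ^ 2) := by funext y; ring
        rw [this]
        exact hmul.neg
      have hneg : (∫ y in Set.Ioc (-(π:ℝ)) π, (lam - U.u y) * ‖w y‖ ^ 2) = -J := by
        rw [hJ, ← integral_neg]
        congr 1
        funext y
        ring
      calc δ * ν ^ d * B ≤ -J := by rw [hBint]; rw [hneg] at hmono; exact hmono
        _ ≤ |J| := neg_le_abs J
  -- numeric endgame
  set sB := Real.sqrt B with hsB
  set sΦ := Real.sqrt Φ with hsΦ
  have hsB0 : 0 ≤ sB := Real.sqrt_nonneg _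
  have hsΦ0 : 0 ≤ sΦ := Real.sqrt_nonneg _
  have hBsq : B = sB ^ 2 := (Real.sq_sqrt hB0).symm
  have hΦsq : Φ = sΦ ^ 2 := (Real.sq_sqrt hΦ0).symm
  have hkey : ν ^ d * sB ≤ δ⁻¹ * sΦ := by
    rcases eq_or_lt_of_le hsB0 with h0 | h0
    · rw [← h0, mul_zero]
      positivity
    · have h2 : δ * ν ^ d * sB ^ 2 ≤ sB * sΦ := by
        rw [← hBsq]
        exact le_trans hJd hJb
      have h3 : δ * (ν ^ d * sB) ≤ sΦ := by nlinarith
      calc ν ^ d * sB = δ⁻¹ * (δ * (ν ^ d * sB)) := by field_simp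
        _ ≤ δ⁻¹ * sΦ := mul_le_mul_of_nonneg_left h3 (inv_nonneg.2 hδ0.le)
  have hterm2 : ν ^ (2 * d) * B ≤ δ⁻¹ * δ⁻¹ * Φ := by
    have h2d : ν ^ (2 * d) = (ν ^ d) ^ 2 := by
      rw [show 2 * d = d * 2 by ring, Real.rpow_mul hν0.le,
        show ((2:ℝ)) = ((2:ℕ):ℝ) by norm_num, Real.rpow_natCast]
    rw [h2d, hBsq, hΦsq]
    calc (ν ^ d) ^ 2 * sB ^ 2 = (ν ^ d * sB) ^ 2 := by ring
      _ ≤ (δ⁻¹ * sΦ) ^ 2 := by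
          refine pow_le_pow_left₀ (by positivity) hkey 2
      _ = δ⁻¹ * δ⁻¹ * sΦ ^ 2 := by ring
  have hterm1 : ν ^ (1 + d) * A ≤ δ⁻¹ * Φ := by
    have h1d : ν ^ (1 + d) = ν * ν ^ d := by
      rw [Real.rpow_add hν0, Real.rpow_one]
    rw [h1d, hΦsq]
    calc ν * ν ^ d * A = ν ^ d * (ν * A) := by ring
      _ ≤ ν ^ d * (sB * sΦ) := mul_le_mul_of_nonneg_left h1 hpd.le
      _ = (ν ^ d * sB) * sΦ := by ring
      _ ≤ (δ⁻¹ * sΦ) * sΦ := mul_le_mul_of_nonneg_right hkey hsΦ0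
      _ = δ⁻¹ * sΦ ^ 2 := by ring
  calc ν ^ (1 + d) * A + ν ^ (2 * d) * B ≤ δ⁻¹ * Φ + δ⁻¹ * δ⁻¹ * Φ :=
      add_le_add hterm1 hterm2
    _ = (δ⁻¹ + δ⁻¹ * δ⁻¹) * Φ := by ring
end

section
/- Let γ ∈ (1/2,2] and let u ∈ C^∞(𝕋) be a real-valued shear profile with a critical point y* of vanishing order j ≥ 1 satisfying C₁^{−1}|y−y*|^{j} ≤ |u'(y)| ≤ C₁|y−y*|^{j} on a ball B(y*;R) for some C₁ > 1 and R ∈ (0,π/10). Let ξ ∈ C^∞(𝕋) be supported in B(y*;2r) with 2r ≤ R, and let f ∈ H^γ(𝕋;ℂ), f_i = fξ. Then there exists a constant C_spec(u) ≥ 1, depending only on u, such that for all ν ∈ (0,1): ν^{(j+1)/(j+1+2γ)} ‖f_i‖_{L²(𝕋)}² ≤ C_spec(u) ν ‖|∂_y|^γ f_i‖_{L²(𝕋)}² + C_spec(u) ν^{(1−j)/(j+1+2γ)} ‖u' f_i‖_{L²(𝕋)}². -/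
open MeasureTheory Real Complex

section SpectralGapAux

open Set

noncomputable section

private lemma h2pi_ne : ((2*π:ℝ):ℂ) ≠ 0 := by
  simp only [ne_eq, Complex.ofReal_eq_zero]; positivity

private lemma sq_int {g : ℝ → ℂ} {μ : MeasureTheory.Measure ℝ} (hg : MemLp g 2 μ) :
    Integrable (fun y => ‖g y‖^2) μ := by
  have := hg.integrable_norm_rpow (by norm_num) (by norm_num)
  simpa [ENNReal.toReal_ofNat, Real.rpow_natCast] using this

private lemma norm_exp_unit (ℓ : ℤ) (y : ℝ) :
    ‖Complex.exp (-Complex.I * (ℓ:ℂ) * (y:ℂ))‖ = 1 := by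
  rw [Complex.norm_exp]
  simp

private lemma norm_exp_unit' (k : ℤ) (y : ℝ) :
    ‖Complex.exp (Complex.I * (k:ℂ) * (y:ℂ))‖ = 1 := by
  rw [Complex.norm_exp]
  simp

private lemma integrable_mul_exp {g : ℝ → ℂ} (hg : MemL2 g) (ℓ : ℤ) :
    Integrable (fun y => g y * Complex.exp (-Complex.I * (ℓ:ℂ) * (y:ℂ)))
      (volume.restrict (Set.Ioc (-(π:ℝ)) π)) := by
  have h1 : Integrable g (volume.restrict (Set.Ioc (-(π:ℝ)) π)) :=
    hg.integrable (by norm_num)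
  refine h1.norm.mono' ?_ ?_
  · exact hg.aestronglyMeasurable.mul
      ((Complex.continuous_exp.comp (by continuity)).aestronglyMeasurable)
  · refine Filter.Eventually.of_forall fun y => ?_
    rw [norm_mul, norm_exp_unit, mul_one]

private lemma fc_sub {g h : ℝ → ℂ} (hg : MemL2 g) (hh : MemL2 h) (ℓ : ℤ) :
    fc (fun y => g y - h y) ℓ = fc g ℓ - fc h ℓ := by
  unfold fc
  rw [← mul_sub]
  congr 1
  rw [← MeasureTheory.integral_sub (integrable_mul_exp hg ℓ) (integrable_mul_exp hh ℓ)]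
  congr 1
  ext y
  ring

private lemma parseval {g : ℝ → ℂ} (hg : MemL2 g) :
    Summable (fun ℓ : ℤ => ‖fc g ℓ‖^2) ∧ L2sq g = (2*π) * ∑' ℓ : ℤ, ‖fc g ℓ‖^2 := by
  haveI : Fact ((0:ℝ) < 2*π) := ⟨Real.two_pi_pos⟩
  have hπ : -π + 2*π = π := by ring
  have hsm := hg.aestronglyMeasurable
  set g' : ℝ → ℂ := hsm.mk g with hg'def
  have hg'm : StronglyMeasurable g' := hsm.stronglyMeasurable_mk
  have hae : g =ᵐ[volume.restrict (Ioc (-π) π)] g' := hsm.ae_eq_mk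
  set G : AddCircle (2*π) → ℂ := AddCircle.liftIoc (2*π) (-π) g' with hGdef
  have hGm : StronglyMeasurable G :=
    hg'm.comp_measurable (measurable_subtype_coe.comp
      (AddCircle.measurableEquivIoc (2*π) (-π)).measurable)
  have hmk : ∀ y : ℝ, y ∈ Ioc (-π) π → G (y : AddCircle (2*π)) = g' y := by
    intro y hy
    exact AddCircle.liftIoc_coe_apply (by rwa [hπ])
  have haeG : (fun y : ℝ => G (y : AddCircle (2*π))) =ᵐ[volume.restrict (Ioc (-π) π)] g := by
    filter_upwards [MeasureTheory.ae_restrict_mem measurableSet_Ioc, hae] with y hy h2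
    rw [hmk y hy, h2]
  have hmp := AddCircle.measurePreserving_mk (2*π) (-π)
  have hmemvol : MemLp G 2 (volume : Measure (AddCircle (2*π))) := by
    rw [← hmp.map_eq,
      memLp_map_measure_iff hGm.aestronglyMeasurable AddCircle.measurable_mk'.aemeasurable]
    rw [hπ]
    exact hg.ae_eq haeG.symm
  have hmemhaar : MemLp G 2 (AddCircle.haarAddCircle (T := 2*π)) := by
    apply hmemvol.mono_measure
    rw [AddCircle.volume_eq_smul_haarAddCircle]
    intro s
    simp only [Measure.smul_apply, smul_eq_mul]
    exact le_mul_of_one_le_left (by simp)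
      (ENNReal.one_le_ofReal.mpr (by linarith [Real.pi_gt_three]))
  set F := hmemhaar.toLp G with hF
  have hFeq : (F : AddCircle (2*π) → ℂ) =ᵐ[AddCircle.haarAddCircle] G := hmemhaar.coeFn_toLp
  have hcoefF : ∀ ℓ : ℤ, fourierCoeff (F : AddCircle (2*π) → ℂ) ℓ = fourierCoeff G ℓ := by
    intro ℓ
    apply MeasureTheory.integral_congr_ae
    filter_upwards [hFeq] with x hx
    rw [hx]
  have hcoefG : ∀ ℓ : ℤ, fourierCoeff G ℓ = fc g ℓ := by
    intro ℓ
    rw [fourierCoeff_eq_intervalIntegral G ℓ (-π), hπ,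
      intervalIntegral.integral_of_le (by linarith [Real.pi_pos] : -π ≤ π)]
    have : ∫ y in Ioc (-π) π, (fourier (-ℓ) (y : AddCircle (2*π))) • G (y : AddCircle (2*π))
        = ∫ y in Ioc (-π) π, g y * Complex.exp (-Complex.I * (ℓ : ℂ) * (y : ℂ)) := by
      apply MeasureTheory.integral_congr_ae
      filter_upwards [MeasureTheory.ae_restrict_mem measurableSet_Ioc, hae] with y hy h2
      rw [hmk y hy, ← h2, fourier_coe_apply, smul_eq_mul, mul_comm]
      congr 1
      congr 1
      have hπ0 : (π:ℂ) ≠ 0 := by simp [Real.pi_ne_zero]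
      push_cast
      field_simp
    rw [this, fc]
    rw [Complex.real_smul]
    congr 1
    push_cast
    ring
  have hpars := tsum_sq_fourierCoeff F
  have hintsq : (∫ t, ‖(F : AddCircle (2*π) → ℂ) t‖^2 ∂(AddCircle.haarAddCircle))
      = (2*π)⁻¹ * L2sq g := by
    have e1 : (∫ t, ‖(F : AddCircle (2*π) → ℂ) t‖^2 ∂(AddCircle.haarAddCircle))
        = ∫ t, ‖G t‖^2 ∂(AddCircle.haarAddCircle) := by
      apply MeasureTheory.integral_congr_ae
      filter_upwards [hFeq] with x hx; rw [hx]
    have e2 : ∫ t, ‖G t‖^2 ∂(volume : Measure (AddCircle (2*π)))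
        = (2*π) * ∫ t, ‖G t‖^2 ∂(AddCircle.haarAddCircle) := by
      rw [AddCircle.volume_eq_smul_haarAddCircle, MeasureTheory.integral_smul_measure,
        ENNReal.toReal_ofReal Real.two_pi_pos.le, smul_eq_mul]
    have e3 : ∫ t, ‖G t‖^2 ∂(volume : Measure (AddCircle (2*π)))
        = L2sq g := by
      rw [← AddCircle.integral_preimage (2*π) (-π) (fun t => ‖G t‖^2), hπ]
      apply MeasureTheory.integral_congr_ae
      filter_upwards [haeG] with y hy
      simp only [hy]
    rw [e1]
    rw [e3] at e2
    field_simp at e2 ⊢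
    linarith [e2]
  constructor
  · have hsum : Summable fun ℓ : ℤ => ‖fourierBasis.repr F ℓ‖ ^ (ENNReal.toReal 2) :=
      (lp.memℓp (fourierBasis.repr F)).summable (by norm_num)
    have : ∀ ℓ : ℤ, ‖fourierBasis.repr F ℓ‖ ^ (ENNReal.toReal 2) = ‖fc g ℓ‖^2 := by
      intro ℓ
      rw [fourierBasis_repr, hcoefF, hcoefG]
      norm_num [Real.rpow_natCast]
    rwa [funext this] at hsum
  · have : ∑' ℓ : ℤ, ‖fc g ℓ‖^2 = (2*π)⁻¹ * L2sq g := by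
      rw [← hintsq, ← hpars]
      congr 1
      ext ℓ
      rw [hcoefF, hcoefG]
    rw [this]
    field_simp

private lemma integral_exp_orth (m : ℤ) :
    (∫ y in Set.Ioc (-(π:ℝ)) π, Complex.exp (Complex.I * (m:ℂ) * (y:ℂ)))
      = if m = 0 then ((2*π:ℝ):ℂ) else 0 := by
  rw [← intervalIntegral.integral_of_le (by linarith [Real.pi_pos] : -π ≤ π)]
  by_cases hm : m = 0
  · subst hm
    simp only [Int.cast_zero, mul_zero, zero_mul, Complex.exp_zero, if_true]
    rw [intervalIntegral.integral_const, sub_neg_eq_add, real_smul, mul_one]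
    push_cast
    ring
  · rw [if_neg hm]
    have hc : (Complex.I * (m:ℂ)) ≠ 0 := by
      simp [Complex.I_ne_zero, hm]
    have key := integral_exp_mul_complex (a := -π) (b := π) hc
    have h1 : (fun y : ℝ => Complex.exp (Complex.I * (m:ℂ) * (y:ℂ)))
        = fun y : ℝ => Complex.exp ((Complex.I * (m:ℂ)) * (y:ℂ)) := by
      ext y; ring_nf
    rw [h1, key]
    have e1 : Complex.I * (m:ℂ) * (π:ℂ) = (m:ℂ) * ((π:ℂ) * Complex.I) := by ring
    have e2 : Complex.I * (m:ℂ) * ((-π:ℝ):ℂ) = ((-m:ℤ):ℂ) * ((π:ℂ) * Complex.I) := by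
      push_cast; ring
    rw [e1, e2, Complex.exp_int_mul, Complex.exp_int_mul, Complex.exp_pi_mul_I]
    have hsq : ((-1:ℂ))^m * ((-1:ℂ))^m = 1 := by
      rw [← mul_zpow]; norm_num
    have : ((-1:ℂ))^(-m) = ((-1:ℂ))^m := by
      rw [zpow_neg]
      exact (eq_inv_of_mul_eq_one_left hsq).symm
    rw [this, sub_self, zero_div]

private lemma fc_trig (s : Finset ℤ) (c : ℤ → ℂ) (ℓ : ℤ) :
    fc (fun y => ∑ k ∈ s, c k * Complex.exp (Complex.I * (k:ℂ) * (y:ℂ))) ℓ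
      = if ℓ ∈ s then c ℓ else 0 := by
  unfold fc
  have hcomb : ∀ (k : ℤ) (y : ℝ), c k * Complex.exp (Complex.I * (k:ℂ) * (y:ℂ))
      * Complex.exp (-Complex.I * (ℓ:ℂ) * (y:ℂ))
      = c k * Complex.exp (Complex.I * ((k - ℓ : ℤ):ℂ) * (y:ℂ)) := by
    intro k y
    rw [mul_assoc, ← Complex.exp_add]
    congr 2
    push_cast
    ring
  have hint : ∀ k : ℤ, k ∈ s → Integrable
      (fun y : ℝ => c k * Complex.exp (Complex.I * ((k - ℓ : ℤ):ℂ) * (y:ℂ)))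
      (volume.restrict (Set.Ioc (-(π:ℝ)) π)) := by
    intro k _
    apply Continuous.integrableOn_Ioc
    exact continuous_const.mul (Complex.continuous_exp.comp (by continuity))
  calc ((2 * π : ℝ) : ℂ)⁻¹ * ∫ y in Set.Ioc (-(π:ℝ)) π,
        (∑ k ∈ s, c k * Complex.exp (Complex.I * (k:ℂ) * (y:ℂ)))
          * Complex.exp (-Complex.I * (ℓ:ℂ) * (y:ℂ))
      = ((2 * π : ℝ) : ℂ)⁻¹ * ∫ y in Set.Ioc (-(π:ℝ)) π,
        ∑ k ∈ s, c k * Complex.exp (Complex.I * ((k - ℓ : ℤ):ℂ) * (y:ℂ)) := by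
        congr 1
        apply MeasureTheory.integral_congr_ae
        refine Filter.Eventually.of_forall fun y => ?_
        show (∑ k ∈ s, c k * Complex.exp (Complex.I * (k:ℂ) * (y:ℂ)))
          * Complex.exp (-Complex.I * (ℓ:ℂ) * (y:ℂ)) = _
        rw [Finset.sum_mul]
        exact Finset.sum_congr rfl fun k _ => hcomb k y
    _ = ((2 * π : ℝ) : ℂ)⁻¹ * ∑ k ∈ s, c k *
          ∫ y in Set.Ioc (-(π:ℝ)) π, Complex.exp (Complex.I * ((k - ℓ : ℤ):ℂ) * (y:ℂ)) := by
        rw [MeasureTheory.integral_finset_sum s hint]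
        congr 1
        exact Finset.sum_congr rfl fun k _ => MeasureTheory.integral_const_mul _ _
    _ = if ℓ ∈ s then c ℓ else 0 := by
        have : ∀ k ∈ s, c k * (∫ y in Set.Ioc (-(π:ℝ)) π,
            Complex.exp (Complex.I * ((k - ℓ : ℤ):ℂ) * (y:ℂ)))
            = if k = ℓ then c k * ((2*π:ℝ):ℂ) else 0 := by
          intro k _
          rw [integral_exp_orth (k - ℓ)]
          by_cases hk : k = ℓ
          · rw [if_pos hk, if_pos (sub_eq_zero.mpr hk)]
          · rw [if_neg hk, if_neg (fun h => hk (sub_eq_zero.mp h)), mul_zero]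
        rw [Finset.sum_congr rfl this, Finset.sum_ite_eq' s ℓ (fun k => c k * ((2*π:ℝ):ℂ))]
        by_cases hs : ℓ ∈ s
        · rw [if_pos hs, if_pos hs]
          have hpi0 : (π:ℂ) ≠ 0 := Complex.ofReal_ne_zero.mpr Real.pi_ne_zero
          push_cast
          field_simp
        · rw [if_neg hs, if_neg hs, mul_zero]

end

end SpectralGapAux

open Set in
set_option maxHeartbeats 1000000 in
/-- Spectral gap estimate near a critical point `y*` of vanishing order
`j`: `ν^{(j+1)/(j+1+2γ)} ‖f_i‖² ≤ C_spec ν ‖|∂_y|^γ f_i‖² + C_spec ν^{(1-j)/(j+1+2γ)} ‖u' f_i‖²`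
for `f_i = f ξ` localized near `y*`. -/
theorem spectral_gap_estimate
    (γ : ℝ) (hγ : γ ∈ Set.Ioc (1 / 2 : ℝ) 2)
    (u : ℝ → ℝ) (hu : ContDiff ℝ (⊤ : ℕ∞) u) (huper : Function.Periodic u (2 * π))
    (ystar : ℝ) (j : ℕ) (hj : 1 ≤ j)
    -- y* is a critical point of vanishing order j
    (hcrit : deriv u ystar = 0)
    (hvanish : ∀ ℓ : ℕ, 1 ≤ ℓ → ℓ ≤ j → iteratedDeriv ℓ u ystar = 0)
    (hnonvanish : iteratedDeriv (j + 1) u ystar ≠ 0)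
    -- the non-degeneracy condition C₁⁻¹|y-y*|^j ≤ |u'(y)| ≤ C₁|y-y*|^j on B(y*;R)
    (C1 R : ℝ) (hC1 : 1 < C1) (hR : R ∈ Set.Ioo (0 : ℝ) (π / 10))
    (hlow : ∀ y ∈ Metric.ball ystar R, C1⁻¹ * |y - ystar| ^ j ≤ |deriv u y|)
    (hupp : ∀ y ∈ Metric.ball ystar R, |deriv u y| ≤ C1 * |y - ystar| ^ j) :
    ∃ Cspec : ℝ, 1 ≤ Cspec ∧
      ∀ r : ℝ, 0 < r → 2 * r ≤ R →
      -- ξ is a smooth cutoff supported in B(y*;2r)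
      ∀ ξ : ℝ → ℝ, ContDiff ℝ (⊤ : ℕ∞) ξ → Function.Periodic ξ (2 * π) →
        (∀ y ∈ Set.Ioc (ystar - π) (ystar + π), 2 * r < |y - ystar| → ξ y = 0) →
      ∀ f : ℝ → ℂ, MemHs γ f → Function.Periodic f (2 * π) →
      ∀ fi Dfi : ℝ → ℂ, fi = (fun y => (ξ y : ℂ) * f y) →
        MemL2 Dfi → IsFracDeriv γ fi Dfi →
      ∀ ν ∈ Set.Ioo (0 : ℝ) 1,
        ν ^ dExp j γ * L2sq fi ≤
          Cspec * ν * L2sq Dfi +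
          Cspec * ν ^ ((1 - (j : ℝ)) / ((j : ℝ) + 1 + 2 * γ)) *
            L2sq (fun y => ((deriv u y : ℝ) : ℂ) * fi y) := by
  classical
  have hπ3 := Real.pi_gt_three
  have hπpos := Real.pi_pos
  obtain ⟨hγ1, hγ2⟩ := hγ
  set J : ℝ := (j:ℝ) + 1 + 2*γ with hJdef
  have hj0 : (0:ℝ) ≤ (j:ℝ) := Nat.cast_nonneg j
  have hJpos : 0 < J := by rw [hJdef]; linarith [hj0, hγ1]
  have hu' : Continuous (deriv u) := hu.continuous_deriv (by simp)
  have hlowbar : ∀ z : ℝ, |z - ystar| ≤ R → C1⁻¹ * |z - ystar| ^ j ≤ |deriv u z| := by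
    intro z hz
    have hclosed : IsClosed {y : ℝ | C1⁻¹ * |y - ystar| ^ j - |deriv u y| ≤ 0} := by
      apply isClosed_le
      · exact (continuous_const.mul
          (((continuous_id.sub continuous_const).abs).pow j)).sub hu'.abs
      · exact continuous_const
    have hball : Metric.ball ystar R ⊆ {y : ℝ | C1⁻¹ * |y - ystar| ^ j - |deriv u y| ≤ 0} := by
      intro y hy
      simp only [Set.mem_setOf_eq, sub_nonpos]
      exact hlow y hy
    have hsub : Metric.closedBall ystar R ⊆
        {y : ℝ | C1⁻¹ * |y - ystar| ^ j - |deriv u y| ≤ 0} := by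
      rw [← closure_ball ystar hR.1.ne']
      exact hclosed.closure_subset_iff.mpr hball
    have hmem : z ∈ Metric.closedBall ystar R := by rwa [Metric.mem_closedBall, Real.dist_eq]
    have := hsub hmem
    simpa [sub_nonpos] using this
  have hu'per : Function.Periodic (deriv u) (2*π) := by
    intro x
    have h1 : (fun y => u (y + 2*π)) = u := funext fun y => huper y
    have h2 := deriv_comp_add_const (f := u) (a := 2*π) (x := x)
    rw [h1] at h2
    rw [← h2]
  refine ⟨4*64^4 + 2*C1^2*100^(2*j), ?_, ?_⟩
  · have h1 : (0:ℝ) ≤ 2*C1^2*100^(2*j) := by positivity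
    linarith
  intro r hr hrR ξ hξc hξper hξsupp f hfHs hfper fi Dfi hfidef hDfiL2 hfrac ν hν
  obtain ⟨hν0, hν1⟩ := hν
  set δ : ℝ := ν ^ (1/J) / 100 with hδdef
  have hνJ : 0 < ν ^ (1/J) := Real.rpow_pos_of_pos hν0 _
  have hδ0 : 0 < δ := by rw [hδdef]; positivity
  have hνJ1 : ν ^ (1/J) ≤ 1 := Real.rpow_le_one hν0.le hν1.le (by positivity)
  have hδ100 : δ ≤ 1/100 := by rw [hδdef]; linarith
  set M : ℕ := Nat.floor (1/(64*δ)) with hMdef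
  have hMle : (M:ℝ) ≤ 1/(64*δ) := Nat.floor_le (by positivity)
  have hMgt : 1/(64*δ) < (M:ℝ) + 1 := Nat.lt_floor_add_one _
  clear_value J δ M
  have hfL2 : MemL2 f := hfHs.1
  obtain ⟨Cξ, hCξ⟩ := (isCompact_Icc (a := -π) (b := π)).exists_bound_of_continuousOn
      ((Complex.continuous_ofReal.comp hξc.continuous).continuousOn)
  have hfiL2 : MemL2 fi := by
    rw [hfidef]
    refine MemLp.of_le_mul (c := Cξ) hfL2 ?_ ?_
    · exact ((Complex.continuous_ofReal.comp hξc.continuous).aestronglyMeasurable).mul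
        hfL2.aestronglyMeasurable
    · filter_upwards [MeasureTheory.ae_restrict_mem measurableSet_Ioc] with y hy
      rw [norm_mul]
      exact mul_le_mul_of_nonneg_right (hCξ y (Set.Ioc_subset_Icc_self hy)) (norm_nonneg _)
  obtain ⟨Cu, hCu⟩ := (isCompact_Icc (a := -π) (b := π)).exists_bound_of_continuousOn
      ((Complex.continuous_ofReal.comp hu').continuousOn)
  have hUL2 : MemL2 (fun y => ((deriv u y : ℝ):ℂ) * fi y) := by
    refine MemLp.of_le_mul (c := Cu) hfiL2 ?_ ?_
    · exact ((Complex.continuous_ofReal.comp hu').aestronglyMeasurable).mul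
        hfiL2.aestronglyMeasurable
    · filter_upwards [MeasureTheory.ae_restrict_mem measurableSet_Ioc] with y hy
      rw [norm_mul]
      exact mul_le_mul_of_nonneg_right (hCu y (Set.Ioc_subset_Icc_self hy)) (norm_nonneg _)
  obtain ⟨hSfi, hPfi⟩ := parseval hfiL2
  obtain ⟨hSD, hPD⟩ := parseval hDfiL2
  set s : Finset ℤ := Finset.Icc (-(M:ℤ)) (M:ℤ) with hsdef
  set P : ℝ → ℂ := fun y => ∑ k ∈ s, fc fi k * Complex.exp (Complex.I * (k:ℂ) * (y:ℂ))
    with hPdef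
  have hPc : Continuous P := by
    apply continuous_finset_sum
    intro k _
    exact continuous_const.mul (Complex.continuous_exp.comp (by continuity))
  set B : ℝ := ∑ k ∈ s, ‖fc fi k‖ with hBdef
  have hPbound : ∀ y : ℝ, ‖P y‖ ≤ B := by
    intro y
    refine (norm_sum_le _ _).trans ?_
    apply Finset.sum_le_sum
    intro k _
    rw [norm_mul, norm_exp_unit' k y, mul_one]
  have hPL2 : MemL2 P := MemLp.of_bound hPc.aestronglyMeasurable B
      (Filter.Eventually.of_forall hPbound)
  have hQL2 : MemL2 (fun y => fi y - P y) := hfiL2.sub hPL2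
  obtain ⟨hSQ, hPQ⟩ := parseval hQL2
  have hfcQ : ∀ ℓ : ℤ, fc (fun y => fi y - P y) ℓ = if ℓ ∈ s then 0 else fc fi ℓ := by
    intro ℓ
    rw [fc_sub hfiL2 hPL2 ℓ, hPdef, fc_trig s (fc fi) ℓ]
    by_cases h : ℓ ∈ s <;> simp [h]
  have hfcD : ∀ ℓ : ℤ, ‖fc Dfi ℓ‖^2 = (|(ℓ:ℝ)| ^ γ)^2 * ‖fc fi ℓ‖^2 := by
    intro ℓ
    rw [hfrac ℓ, norm_mul, mul_pow, _root_.Complex.norm_real,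
      Real.norm_eq_abs, _root_.abs_of_nonneg (Real.rpow_nonneg (abs_nonneg _) _)]
  have h2γpos : (0:ℝ) < 2*γ := by linarith
  have htail : ∀ ℓ : ℤ, ‖fc (fun y => fi y - P y) ℓ‖^2
      ≤ ((M:ℝ)+1)^(-(2*γ)) * ‖fc Dfi ℓ‖^2 := by
    intro ℓ
    rw [hfcQ ℓ]
    by_cases h : ℓ ∈ s
    · simp only [h, if_true]
      have : (0:ℝ) ≤ ((M:ℝ)+1)^(-(2*γ)) * ‖fc Dfi ℓ‖^2 := by positivity
      simpa using this
    · simp only [h, if_false]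
      have habs : (M:ℝ)+1 ≤ |(ℓ:ℝ)| := by
        rw [hsdef] at h
        simp only [Finset.mem_Icc, not_and_or, not_le] at h
        have h' : (M:ℤ) + 1 ≤ |ℓ| := by
          rcases h with h | h
          · rw [abs_of_neg (by omega)]; omega
          · rw [abs_of_pos (by omega)]; omega
        calc (M:ℝ)+1 = (((M:ℤ)+1 : ℤ):ℝ) := by push_cast; ring
          _ ≤ |(ℓ:ℝ)| := by rw [← Int.cast_abs]; exact_mod_cast h'
      have hℓpos : (0:ℝ) < |(ℓ:ℝ)| := lt_of_lt_of_le (by positivity) habs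
      have hpow : ((M:ℝ)+1)^(2*γ) ≤ |(ℓ:ℝ)|^(2*γ) :=
        Real.rpow_le_rpow (by positivity) habs h2γpos.le
      have hsqe : (|(ℓ:ℝ)| ^ γ)^2 = |(ℓ:ℝ)|^(2*γ) := by
        rw [← Real.rpow_natCast (|(ℓ:ℝ)| ^ γ) 2, ← Real.rpow_mul (abs_nonneg _)]
        norm_num [mul_comm]
      rw [hfcD ℓ, hsqe, Real.rpow_neg (by positivity), inv_mul_eq_div, le_div_iff₀
        (Real.rpow_pos_of_pos (by positivity) _)]
      linarith [mul_le_mul_of_nonneg_left hpow (sq_nonneg ‖fc fi ℓ‖)]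
  have hQbound : L2sq (fun y => fi y - P y) ≤ ((M:ℝ)+1)^(-(2*γ)) * L2sq Dfi := by
    rw [hPQ, hPD]
    have h1 : ∑' ℓ : ℤ, ‖fc (fun y => fi y - P y) ℓ‖^2
        ≤ ∑' ℓ : ℤ, ((M:ℝ)+1)^(-(2*γ)) * ‖fc Dfi ℓ‖^2 :=
      Summable.tsum_le_tsum htail hSQ (hSD.mul_left _)
    rw [tsum_mul_left] at h1
    have h2π := Real.two_pi_pos
    linarith [mul_le_mul_of_nonneg_left h1 h2π.le]
  have hcard : ((s.card:ℝ)) = 2*(M:ℝ)+1 := by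
    rw [hsdef, Int.card_Icc]
    have h : ((M:ℤ) + 1 - -(M:ℤ)).toNat = 2*M+1 := by omega
    rw [h]; push_cast; ring
  have hB2 : B^2 ≤ (2*(M:ℝ)+1) * ∑' ℓ : ℤ, ‖fc fi ℓ‖^2 := by
    have hcs := Finset.sum_mul_sq_le_sq_mul_sq s (fun _ => (1:ℝ)) (fun k => ‖fc fi k‖)
    simp only [one_pow, one_mul, Finset.sum_const, nsmul_eq_mul] at hcs
    have hsum_le : ∑ k ∈ s, ‖fc fi k‖^2 ≤ ∑' ℓ : ℤ, ‖fc fi ℓ‖^2 :=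
      Summable.sum_le_tsum s (fun ℓ _ => sq_nonneg _) hSfi
    calc B^2 ≤ (s.card:ℝ) * ∑ k ∈ s, ‖fc fi k‖^2 := by rw [hBdef]; simpa using hcs
      _ ≤ (s.card:ℝ) * ∑' ℓ : ℤ, ‖fc fi ℓ‖^2 := by
          apply mul_le_mul_of_nonneg_left hsum_le (by positivity)
      _ = (2*(M:ℝ)+1) * ∑' ℓ : ℤ, ‖fc fi ℓ‖^2 := by rw [hcard]
  -- geometry
  obtain ⟨kc, hkcmem, -⟩ := existsUnique_add_zsmul_mem_Ioc Real.two_pi_pos ystar (-π)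
  rw [show -π + 2*π = π by ring] at hkcmem
  set c : ℝ := ystar + kc • (2*π) with hcdef
  have hc' : c = ystar + (kc:ℝ)*(2*π) := by rw [hcdef, zsmul_eq_mul]
  set arcs : Set ℝ := Icc (c-δ) (c+δ) ∪ Icc (c-2*π-δ) (c-2*π+δ) ∪ Icc (c+2*π-δ) (c+2*π+δ)
    with harcdef
  have harcmeas : MeasurableSet arcs :=
    (measurableSet_Icc.union measurableSet_Icc).union measurableSet_Icc
  have hfi2 : MeasureTheory.IntegrableOn (fun y => ‖fi y‖^2) (Set.Ioc (-(π:ℝ)) π) volume :=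
    sq_int hfiL2
  have hP2 : MeasureTheory.IntegrableOn (fun y => ‖P y‖^2) (Set.Ioc (-(π:ℝ)) π) volume :=
    sq_int hPL2
  have hQ2 : MeasureTheory.IntegrableOn (fun y => ‖fi y - P y‖^2) (Set.Ioc (-(π:ℝ)) π) volume :=
    sq_int hQL2
  have hU2 : MeasureTheory.IntegrableOn (fun y => ‖((deriv u y:ℝ):ℂ) * fi y‖^2)
      (Set.Ioc (-(π:ℝ)) π) volume :=
    sq_int hUL2
  set Sin : Set ℝ := Set.Ioc (-(π:ℝ)) π ∩ arcs with hSindef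
  set Sout : Set ℝ := Set.Ioc (-(π:ℝ)) π \ arcs with hSoutdef
  have hSinmeas : MeasurableSet Sin := measurableSet_Ioc.inter harcmeas
  have hSinsub : Sin ⊆ Set.Ioc (-(π:ℝ)) π := Set.inter_subset_left
  have hSoutsub : Sout ⊆ Set.Ioc (-(π:ℝ)) π := Set.diff_subset
  have hsplit : (∫ y in Sin, ‖fi y‖^2) + (∫ y in Sout, ‖fi y‖^2) = L2sq fi :=
    MeasureTheory.integral_inter_add_diff harcmeas hfi2
  have hvolSin : (volume Sin).toReal ≤ 6*δ := by
    have h1 : volume Sin ≤ volume arcs := measure_mono Set.inter_subset_right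
    have h2 : volume arcs ≤ ENNReal.ofReal (2*δ) + ENNReal.ofReal (2*δ) + ENNReal.ofReal (2*δ) := by
      rw [harcdef]
      refine (measure_union_le _ _).trans (add_le_add ((measure_union_le _ _).trans
        (add_le_add ?_ ?_)) ?_) <;>
      · rw [Real.volume_Icc]
        exact ENNReal.ofReal_le_ofReal (by linarith)
    have h3 : volume Sin ≤ ENNReal.ofReal (6*δ) := by
      refine h1.trans (h2.trans ?_)
      rw [← ENNReal.ofReal_add (by positivity) (by positivity),
        ← ENNReal.ofReal_add (by positivity) (by positivity)]
      exact ENNReal.ofReal_le_ofReal (by linarith)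
    exact ENNReal.toReal_le_of_le_ofReal (by positivity) h3
  have hinner1 : ∫ y in Sin, ‖fi y‖^2
      ≤ ∫ y in Sin, (2*‖P y‖^2 + 2*‖fi y - P y‖^2) := by
    refine MeasureTheory.setIntegral_mono_on (hfi2.mono_set hSinsub)
      (((hP2.mono_set hSinsub).const_mul 2).add ((hQ2.mono_set hSinsub).const_mul 2))
      hSinmeas ?_
    intro y _
    have h1 : ‖fi y‖ ≤ ‖P y‖ + ‖fi y - P y‖ := by
      calc ‖fi y‖ = ‖P y + (fi y - P y)‖ := by ring_nf
        _ ≤ ‖P y‖ + ‖fi y - P y‖ := norm_add_le _ _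
    have h2 : ‖fi y‖^2 ≤ (‖P y‖ + ‖fi y - P y‖)^2 :=
      pow_le_pow_left₀ (norm_nonneg _) h1 2
    linarith [h2, two_mul_le_add_sq ‖P y‖ ‖fi y - P y‖]
  have hinner2 : (∫ y in Sin, (2*‖P y‖^2 + 2*‖fi y - P y‖^2))
      = 2 * (∫ y in Sin, ‖P y‖^2) + 2 * (∫ y in Sin, ‖fi y - P y‖^2) := by
    rw [MeasureTheory.integral_add ((hP2.mono_set hSinsub).const_mul 2)
      ((hQ2.mono_set hSinsub).const_mul 2), MeasureTheory.integral_const_mul,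
      MeasureTheory.integral_const_mul]
  have hinnerP : ∫ y in Sin, ‖P y‖^2 ≤ B^2 * (6*δ) := by
    have h1 : ∫ y in Sin, ‖P y‖^2 ≤ ∫ y in Sin, B^2 := by
      refine MeasureTheory.setIntegral_mono_on (hP2.mono_set hSinsub)
        ((MeasureTheory.integrableOn_const_iff (C := B^2)).mpr (Or.inr
          ((measure_mono hSinsub).trans_lt measure_Ioc_lt_top))) hSinmeas ?_
      intro y _
      exact pow_le_pow_left₀ (norm_nonneg _) (hPbound y) 2
    have h2 : (∫ _ in Sin, (B^2 : ℝ)) = (volume Sin).toReal * B^2 := by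
      rw [MeasureTheory.setIntegral_const, smul_eq_mul]; rfl
    calc ∫ y in Sin, ‖P y‖^2 ≤ (volume Sin).toReal * B^2 := by rw [← h2]; exact h1
      _ ≤ 6*δ*B^2 := mul_le_mul_of_nonneg_right hvolSin (sq_nonneg B)
      _ = B^2 * (6*δ) := by ring
  have hL2Q : L2sq (fun y => fi y - P y) = ∫ y in Set.Ioc (-(π:ℝ)) π, ‖fi y - P y‖^2 := rfl
  have hinnerQ : ∫ y in Sin, ‖fi y - P y‖^2 ≤ ((M:ℝ)+1)^(-(2*γ)) * L2sq Dfi := by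
    refine le_trans ?_ (le_trans (le_of_eq hL2Q.symm) hQbound)
    exact MeasureTheory.setIntegral_mono_set hQ2
      (Filter.Eventually.of_forall fun y => sq_nonneg _)
      (HasSubset.Subset.eventuallyLE hSinsub)
  -- outer estimate
  have hkey : ∀ y ∈ Sout, δ^(2*j) * ‖fi y‖^2 ≤ C1^2 * ‖((deriv u y:ℝ):ℂ) * fi y‖^2 := by
    intro y hy
    obtain ⟨hyΩ, hyarc⟩ := hy
    by_cases hfi0 : fi y = 0
    · simp [hfi0]
    · have hξy : ξ y ≠ 0 := fun h => hfi0 (by rw [hfidef]; simp [h])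
      obtain ⟨m, hmmem, -⟩ := existsUnique_add_zsmul_mem_Ioc Real.two_pi_pos y (ystar - π)
      rw [show ystar - π + 2*π = ystar + π by ring] at hmmem
      set z : ℝ := y + m • (2*π) with hzdef
      have hz' : z = y + (m:ℝ)*(2*π) := by rw [hzdef, zsmul_eq_mul]
      have hξz : ξ z = ξ y := by
        rw [hz']
        have h := hξper.sub_zsmul_eq (x := y + (m:ℝ)*(2*π)) m
        simpa [zsmul_eq_mul] using h.symm
      have hzsupp : |z - ystar| ≤ 2*r := by
        by_contra hcon
        push_neg at hcon
        exact hξy (hξz ▸ hξsupp z hmmem hcon)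
      have hzR : |z - ystar| ≤ R := le_trans hzsupp hrR
      have hlowz := hlowbar z hzR
      have hderiv_eq : deriv u y = deriv u z := by
        rw [hz']
        have h := hu'per.sub_zsmul_eq (x := y + (m:ℝ)*(2*π)) m
        simpa [zsmul_eq_mul] using h
      set e : ℤ := m + kc with hedef
      have hze : z - ystar = (y - c) + (e:ℝ)*(2*π) := by
        rw [hz', hc', hedef]; push_cast; ring
      have hzpi : |z - ystar| ≤ π := by
        obtain ⟨h1, h2⟩ := hmmem
        rw [abs_le]; constructor <;> linarith
      have hycpi : |y - c| < 2*π := by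
        obtain ⟨h1, h2⟩ := hyΩ
        obtain ⟨h3, h4⟩ := hkcmem
        rw [abs_lt]; constructor <;> linarith
      have heb : e = -1 ∨ e = 0 ∨ e = 1 := by
        have h2e : |(e:ℝ)| * (2*π) = |(e:ℝ)*(2*π)| := by
          rw [abs_mul, abs_of_pos Real.two_pi_pos]
        have h3e : |(e:ℝ)*(2*π)| ≤ |z - ystar| + |y - c| := by
          have he' : (e:ℝ)*(2*π) = (z - ystar) + -(y - c) := by rw [hze]; ring
          rw [he']
          refine (abs_add_le _ _).trans ?_
          rw [abs_neg]
        have h4e : |(e:ℝ)| < 2 := by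
          by_contra hcon
          push_neg at hcon
          have h6e : 2*(2*π) ≤ |(e:ℝ)| * (2*π) :=
            mul_le_mul_of_nonneg_right hcon Real.two_pi_pos.le
          linarith [h2e, h3e, hzpi, hycpi, hπpos]
        have h5e : -2 < e ∧ e < 2 := abs_lt.mp (by exact_mod_cast h4e)
        omega
      have harcs : y ∉ Icc (c-δ) (c+δ) ∧ y ∉ Icc (c-2*π-δ) (c-2*π+δ)
          ∧ y ∉ Icc (c+2*π-δ) (c+2*π+δ) := by
        rw [harcdef] at hyarc
        simp only [Set.mem_union, not_or] at hyarc
        exact ⟨hyarc.1.1, hyarc.1.2, hyarc.2⟩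
      have hdist : δ < |z - ystar| := by
        rcases heb with he | he | he
        · have hcomp := harcs.2.2
          simp only [Set.mem_Icc, not_and_or, not_le] at hcomp
          rw [hze, he]
          push_cast
          rw [lt_abs]
          rcases hcomp with h | h
          · right; linarith
          · left; linarith
        · have hcomp := harcs.1
          simp only [Set.mem_Icc, not_and_or, not_le] at hcomp
          rw [hze, he]
          push_cast
          rw [lt_abs]
          rcases hcomp with h | h
          · right; linarith
          · left; linarith
        · have hcomp := harcs.2.1
          simp only [Set.mem_Icc, not_and_or, not_le] at hcomp
          rw [hze, he]
          push_cast
          rw [lt_abs]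
          rcases hcomp with h | h
          · right; linarith
          · left; linarith
      have hj1 : δ^j ≤ |z - ystar|^j := pow_le_pow_left₀ hδ0.le hdist.le j
      have hC1pos : (0:ℝ) < C1 := by linarith
      have hlowy : C1⁻¹ * δ^j ≤ |deriv u y| := by
        rw [hderiv_eq]
        calc C1⁻¹ * δ^j ≤ C1⁻¹ * |z-ystar|^j :=
              mul_le_mul_of_nonneg_left hj1 (inv_nonneg.mpr hC1pos.le)
          _ ≤ |deriv u z| := hlowz
      have hδj : δ^j ≤ C1 * |deriv u y| := by
        calc δ^j = C1*(C1⁻¹*δ^j) := by field_simp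
          _ ≤ C1*|deriv u y| := mul_le_mul_of_nonneg_left hlowy hC1pos.le
      have hnormU : ‖((deriv u y:ℝ):ℂ) * fi y‖ = |deriv u y| * ‖fi y‖ := by
        rw [norm_mul, _root_.Complex.norm_real, Real.norm_eq_abs]
      rw [hnormU]
      have h2j : δ^(2*j) = (δ^j)^2 := by rw [← pow_mul, mul_comm]
      rw [h2j, mul_pow]
      have hsq : (δ^j)^2 ≤ (C1*|deriv u y|)^2 :=
        pow_le_pow_left₀ (pow_nonneg hδ0.le j) hδj 2
      linarith [mul_le_mul_of_nonneg_right hsq (sq_nonneg ‖fi y‖)]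
  have hδ2jpos : (0:ℝ) < δ^(2*j) := pow_pos hδ0 _
  have hL2U : L2sq (fun y => ((deriv u y : ℝ) : ℂ) * fi y)
      = ∫ y in Set.Ioc (-(π:ℝ)) π, ‖((deriv u y:ℝ):ℂ) * fi y‖^2 := rfl
  have hUnn : 0 ≤ L2sq (fun y => ((deriv u y : ℝ) : ℂ) * fi y) := by
    rw [hL2U]; exact MeasureTheory.integral_nonneg fun y => sq_nonneg _
  have houter : ∫ y in Sout, ‖fi y‖^2
      ≤ C1^2 / δ^(2*j) * L2sq (fun y => ((deriv u y : ℝ) : ℂ) * fi y) := by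
    have h1 : ∫ y in Sout, δ^(2*j) * ‖fi y‖^2
        ≤ ∫ y in Sout, C1^2 * ‖((deriv u y:ℝ):ℂ) * fi y‖^2 :=
      MeasureTheory.setIntegral_mono_on ((hfi2.mono_set hSoutsub).const_mul _)
        ((hU2.mono_set hSoutsub).const_mul _) (measurableSet_Ioc.diff harcmeas) hkey
    rw [MeasureTheory.integral_const_mul, MeasureTheory.integral_const_mul] at h1
    have h2 : ∫ y in Sout, ‖((deriv u y:ℝ):ℂ) * fi y‖^2
        ≤ L2sq (fun y => ((deriv u y : ℝ) : ℂ) * fi y) := by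
      rw [hL2U]
      exact MeasureTheory.setIntegral_mono_set hU2
        (Filter.Eventually.of_forall fun y => sq_nonneg _)
        (HasSubset.Subset.eventuallyLE hSoutsub)
    rw [div_mul_eq_mul_div, le_div_iff₀ hδ2jpos]
    calc (∫ y in Sout, ‖fi y‖^2) * δ^(2*j) = δ^(2*j) * ∫ y in Sout, ‖fi y‖^2 := by ring
      _ ≤ C1^2 * ∫ y in Sout, ‖((deriv u y:ℝ):ℂ) * fi y‖^2 := h1
      _ ≤ C1^2 * L2sq (fun y => ((deriv u y : ℝ) : ℂ) * fi y) :=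
          mul_le_mul_of_nonneg_left h2 (by positivity)
  -- coefficient bound
  have hMδ : (M:ℝ)*δ ≤ 1/64 := by
    have h := mul_le_mul_of_nonneg_right hMle hδ0.le
    calc (M:ℝ)*δ ≤ 1/(64*δ)*δ := h
      _ = 1/64 := by field_simp
  have hcoeff : 12*δ*(2*(M:ℝ)+1) ≤ π := by linarith [hMδ, hδ100, hπ3, hδ0]
  have htnn : (0:ℝ) ≤ ∑' ℓ:ℤ, ‖fc fi ℓ‖^2 := tsum_nonneg fun ℓ => sq_nonneg _
  have hDnn : 0 ≤ L2sq Dfi := MeasureTheory.integral_nonneg fun y => sq_nonneg _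
  have hinner : ∫ y in Sin, ‖fi y‖^2
      ≤ (1/2) * L2sq fi + 2*((M:ℝ)+1)^(-(2*γ)) * L2sq Dfi := by
    have hc1 : 2*(B^2*(6*δ)) ≤ (1/2)*L2sq fi := by
      have h1 : 12*δ*B^2 ≤ 12*δ*((2*(M:ℝ)+1) * ∑' ℓ:ℤ, ‖fc fi ℓ‖^2) :=
        mul_le_mul_of_nonneg_left hB2 (by positivity)
      have h3 : (12*δ*(2*(M:ℝ)+1)) * (∑' ℓ:ℤ, ‖fc fi ℓ‖^2)
          ≤ π * ∑' ℓ:ℤ, ‖fc fi ℓ‖^2 := mul_le_mul_of_nonneg_right hcoeff htnn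
      rw [hPfi]
      linarith [h1, h3]
    calc ∫ y in Sin, ‖fi y‖^2 ≤ 2 * (∫ y in Sin, ‖P y‖^2) + 2 * (∫ y in Sin, ‖fi y - P y‖^2) := by
          rw [← hinner2]; exact hinner1
      _ ≤ 2*(B^2*(6*δ)) + 2*(((M:ℝ)+1)^(-(2*γ)) * L2sq Dfi) := by
          have := mul_le_mul_of_nonneg_left hinnerP (by norm_num : (0:ℝ) ≤ 2)
          have := mul_le_mul_of_nonneg_left hinnerQ (by norm_num : (0:ℝ) ≤ 2)
          linarith [mul_le_mul_of_nonneg_left hinnerP (by norm_num : (0:ℝ) ≤ 2),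
            mul_le_mul_of_nonneg_left hinnerQ (by norm_num : (0:ℝ) ≤ 2)]
      _ ≤ (1/2) * L2sq fi + 2*((M:ℝ)+1)^(-(2*γ)) * L2sq Dfi := by linarith
  have hmain : L2sq fi ≤ 4*((M:ℝ)+1)^(-(2*γ)) * L2sq Dfi
      + 2*(C1^2/δ^(2*j)) * L2sq (fun y => ((deriv u y : ℝ) : ℂ) * fi y) := by
    have h2 : L2sq fi ≤ 1/2 * L2sq fi + 2*((M:ℝ)+1)^(-(2*γ)) * L2sq Dfi
        + C1^2/δ^(2*j) * L2sq (fun y => ((deriv u y : ℝ) : ℂ) * fi y) := by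
      calc L2sq fi = (∫ y in Sin, ‖fi y‖^2) + ∫ y in Sout, ‖fi y‖^2 := hsplit.symm
        _ ≤ _ := add_le_add hinner houter
    linarith only [h2]
  -- exponent arithmetic
  have hMinv : ((M:ℝ)+1)^(-(2*γ)) ≤ (64*δ)^(2*γ) := by
    have h1 : ((M:ℝ)+1)⁻¹ ≤ 64*δ := by
      rw [inv_le_comm₀ (by positivity) (by positivity)]
      calc (64*δ)⁻¹ = 1/(64*δ) := (one_div _).symm
        _ ≤ (M:ℝ)+1 := hMgt.le
    calc ((M:ℝ)+1)^(-(2*γ)) = (((M:ℝ)+1)⁻¹)^(2*γ) := by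
          rw [Real.rpow_neg (by positivity), ← Real.inv_rpow (by positivity)]
      _ ≤ (64*δ)^(2*γ) := Real.rpow_le_rpow (by positivity) h1 h2γpos.le
  have h64 : (64*δ)^(2*γ) ≤ 64^4 * δ^(2*γ) := by
    rw [Real.mul_rpow (by norm_num) hδ0.le]
    refine mul_le_mul_of_nonneg_right ?_ (Real.rpow_nonneg hδ0.le _)
    calc (64:ℝ)^(2*γ) ≤ (64:ℝ)^((4:ℕ):ℝ) :=
          Real.rpow_le_rpow_of_exponent_le (by norm_num) (by push_cast; linarith)
      _ = 64^4 := by rw [Real.rpow_natCast]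
  have hδ2γ : δ^(2*γ) ≤ ν^((2*γ)/J) := by
    have h1 : δ ≤ ν^(1/J) := by rw [hδdef]; linarith [hνJ]
    calc δ^(2*γ) ≤ (ν^(1/J))^(2*γ) := Real.rpow_le_rpow hδ0.le h1 h2γpos.le
      _ = ν^((1/J)*(2*γ)) := by rw [← Real.rpow_mul hν0.le]
      _ = ν^((2*γ)/J) := by congr 1; ring
  have hfact1 : ν^(((j:ℝ)+1)/J) * ν^((2*γ)/J) = ν := by
    rw [← Real.rpow_add hν0]
    have h : ((j:ℝ)+1)/J + (2*γ)/J = 1 := by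
      rw [← add_div, hJdef]
      field_simp
    rw [h, Real.rpow_one]
  have hδpow : (δ:ℝ)^(2*j) = ν^((2*(j:ℝ))/J) / 100^(2*j) := by
    rw [hδdef, div_pow]
    congr 1
    rw [← Real.rpow_natCast (ν^(1/J)) (2*j), ← Real.rpow_mul hν0.le]
    congr 1
    push_cast
    ring
  have hfact2 : ν^(((j:ℝ)+1)/J) / ν^((2*(j:ℝ))/J) = ν^((1-(j:ℝ))/J) := by
    rw [← Real.rpow_sub hν0]
    congr 1
    ring
  have hνd : (0:ℝ) < ν^(((j:ℝ)+1)/J) := Real.rpow_pos_of_pos hν0 _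
  have hν2j : (0:ℝ) < ν^((2*(j:ℝ))/J) := Real.rpow_pos_of_pos hν0 _
  have hgoal1 : ν^(((j:ℝ)+1)/J) * (4*((M:ℝ)+1)^(-(2*γ))) ≤ 4*64^4*ν := by
    have h1 : ((M:ℝ)+1)^(-(2*γ)) ≤ 64^4*ν^((2*γ)/J) :=
      le_trans hMinv (le_trans h64 (mul_le_mul_of_nonneg_left hδ2γ (by positivity)))
    calc ν^(((j:ℝ)+1)/J) * (4*((M:ℝ)+1)^(-(2*γ)))
        ≤ ν^(((j:ℝ)+1)/J) * (4*(64^4*ν^((2*γ)/J))) := by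
          refine mul_le_mul_of_nonneg_left ?_ hνd.le
          linarith
      _ = 4*64^4*(ν^(((j:ℝ)+1)/J) * ν^((2*γ)/J)) := by ring
      _ = 4*64^4*ν := by rw [hfact1]
  have hgoal2 : ν^(((j:ℝ)+1)/J) * (2*(C1^2/δ^(2*j))) = 2*C1^2*100^(2*j) * ν^((1-(j:ℝ))/J) := by
    rw [hδpow, ← hfact2]
    have h100 : ((100:ℝ))^(2*j) ≠ 0 := by positivity
    field_simp
  have hdE : ν ^ dExp j γ = ν^(((j:ℝ)+1)/J) := by rw [dExp, hJdef]
  rw [hdE]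
  calc ν^(((j:ℝ)+1)/J) * L2sq fi
      ≤ ν^(((j:ℝ)+1)/J) * (4*((M:ℝ)+1)^(-(2*γ)) * L2sq Dfi
          + 2*(C1^2/δ^(2*j)) * L2sq (fun y => ((deriv u y : ℝ) : ℂ) * fi y)) :=
        mul_le_mul_of_nonneg_left hmain hνd.le
    _ = (ν^(((j:ℝ)+1)/J) * (4*((M:ℝ)+1)^(-(2*γ)))) * L2sq Dfi
          + (ν^(((j:ℝ)+1)/J) * (2*(C1^2/δ^(2*j))))
            * L2sq (fun y => ((deriv u y : ℝ) : ℂ) * fi y) := by ring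
    _ ≤ (4*64^4*ν) * L2sq Dfi + (2*C1^2*100^(2*j) * ν^((1-(j:ℝ))/J))
            * L2sq (fun y => ((deriv u y : ℝ) : ℂ) * fi y) := by
        refine add_le_add (mul_le_mul_of_nonneg_right hgoal1 hDnn) ?_
        rw [hgoal2]
    _ ≤ (4*64^4 + 2*C1^2*100^(2*j)) * ν * L2sq Dfi
          + (4*64^4 + 2*C1^2*100^(2*j)) * ν^((1-(j:ℝ))/J)
            * L2sq (fun y => ((deriv u y : ℝ) : ℂ) * fi y) := by
        have hc1' : (0:ℝ) ≤ 2*C1^2*100^(2*j) := by positivity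
        have hc2' : (0:ℝ) ≤ 4*64^4 := by norm_num
        refine add_le_add (mul_le_mul_of_nonneg_right ?_ hDnn)
          (mul_le_mul_of_nonneg_right ?_ hUnn)
        · exact mul_le_mul_of_nonneg_right (by linarith) hν0.le
        · exact mul_le_mul_of_nonneg_right (by linarith)
            (Real.rpow_pos_of_pos hν0 ((1-(j:ℝ))/J)).le
end

section
/- Let γ ∈ (1/2,2] and let u be a smooth shear profile on the torus satisfying the stated non-degeneracy assumptions, and fix a critical point y_i* of vanishing order j with cutoff ξ_i as described. Fix δ ∈ (0,1) and suppose λ ∈ ℝ satisfies |λ − u(y_i*)| ≥ δ ν^{(j+1)/(j+1+2γ)} and dist(y_i*, {z : u(z) = λ}) ≤ 3r_i. Define E_i = { y ∈ supp(ξ_i²) : |u(y)−λ| ≤ (δ/9) ν^{(j+1)/(j+1+2γ)} }. Then there exist ν₀(u) ∈ (0,1) and C(u) > 0 such that for all ν ∈ (0,ν₀]: (i) the Lebesgue measure of E_i satisfies |E_i| ≤ C(u) δ^{1/(j+1)} ν^{1/(j+1+2γ)}, and (ii) min_{y ∈ E_i} |u'(y)| ≥ C(u)^{−1} δ^{j/(j+1)}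 ν^{j/(j+1+2γ)}. -/
open MeasureTheory Real Complex

set_option maxHeartbeats 1000000 in
/-- In the intermediate case (b), the sublevel set
`E_i = {y ∈ supp(ξ_i²) : |u(y)-λ| ≤ (δ/9) ν^{(j+1)/(j+1+2γ)}}` has measure
`≲ δ^{1/(j+1)} ν^{1/(j+1+2γ)}`, and `|u'| ≳ δ^{j/(j+1)} ν^{j/(j+1+2γ)}` on `E_i`. -/
theorem sublevel_set_estimates
    (γ : ℝ) (hγ : γ ∈ Set.Ioc (1 / 2 : ℝ) 2)
    (U : ShearProfile) (i : Fin U.N)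
    -- the cutoff ξ_i, supported in B(y_i*;2r) and ≡ 1 on B(y_i*;r)
    (r : ℝ) (hr0 : 0 < r) (hrR : r ≤ U.R i / 4) (hrπ : r ≤ π / 10)
    (C0 : ℝ) (hC0 : 1 ≤ C0)
    (hu_loc : ∀ y ∈ Set.Ioc (U.ys i - π) (U.ys i + π), |y - U.ys i| ≤ 2 * r →
      C0⁻¹ * |y - U.ys i| ^ (U.js i + 1) ≤ |U.u y - U.u (U.ys i)| ∧
      |U.u y - U.u (U.ys i)| ≤ C0 * |y - U.ys i| ^ (U.js i + 1))
    (ξ : ℝ → ℝ) (hξs : ContDiff ℝ (⊤ : ℕ∞) ξ) (hξper : Function.Periodic ξ (2 * π))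
    (hξsupp : ∀ y ∈ Set.Ioc (U.ys i - π) (U.ys i + π), 2 * r < |y - U.ys i| → ξ y = 0)
    (hξone : ∀ y : ℝ, |y - U.ys i| ≤ r → ξ y = 1) :
    ∃ ν₀ ∈ Set.Ioo (0 : ℝ) 1, ∃ C > (0 : ℝ),
      ∀ δ ∈ Set.Ioo (0 : ℝ) 1, ∀ ν ∈ Set.Ioc (0 : ℝ) ν₀, ∀ lam : ℝ,
        δ * ν ^ dExp (U.js i) γ ≤ |lam - U.u (U.ys i)| →
        (∃ z ∈ Set.Ioc (U.ys i - π) (U.ys i + π), U.u z = lam ∧ |z - U.ys i| ≤ 3 * r) →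
        ∀ E : Set ℝ,
          E = {y ∈ Set.Ioc (U.ys i - π) (U.ys i + π) |
            ξ y ≠ 0 ∧ |U.u y - lam| ≤ δ / 9 * ν ^ dExp (U.js i) γ} →
          -- (i) measure of E_i
          (volume E).toReal ≤
            C * δ ^ ((1 : ℝ) / ((U.js i : ℝ) + 1)) * ν ^ ((1 : ℝ) / ((U.js i : ℝ) + 1 + 2 * γ))
          -- (ii) lower bound for |u'| on E_i
          ∧ ∀ y ∈ E,
            C⁻¹ * δ ^ ((U.js i : ℝ) / ((U.js i : ℝ) + 1)) *
              ν ^ ((U.js i : ℝ) / ((U.js i : ℝ) + 1 + 2 * γ)) ≤ |deriv U.u y| := by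

  obtain ⟨hγl, _⟩ := hγ
  set j : ℕ := U.js i with hjdef
  have hC1 : (1:ℝ) < U.C1 := U.C1_gt
  have hC1pos : (0:ℝ) < U.C1 := lt_trans one_pos hC1
  have hC0pos : (0:ℝ) < C0 := lt_of_lt_of_le one_pos hC0
  have hRpos : 0 < U.R i := (U.R_mem i).1
  have hj1pos : (0:ℝ) < (j:ℝ) + 1 := by positivity
  have hden : (0:ℝ) < (j:ℝ) + 1 + 2 * γ := by linarith
  set t : ℝ := (j:ℝ) / ((j:ℝ) + 1) with htdef
  have ht0 : 0 ≤ t := by positivity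
  set K : ℝ := (9 * C0 / 8) ^ t with hKdef
  have hKpos : 0 < K := Real.rpow_pos_of_pos (by positivity) t
  set d : ℝ := dExp j γ with hddef
  have hdeq : d = ((j:ℝ) + 1) / ((j:ℝ) + 1 + 2 * γ) := rfl
  have hdpos : 0 < d := by rw [hdeq]; exact div_pos hj1pos hden
  refine ⟨1/2, by norm_num, 8 * U.C1 * K, by positivity, ?_⟩
  rintro δ ⟨hδ0, hδ1⟩ ν ⟨hν0, hν2⟩ lam hlam - E hE
  have hνd : 0 < ν ^ d := Real.rpow_pos_of_pos hν0 d
  set ε : ℝ := δ / 9 * ν ^ d with hεdef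
  have hε0 : 0 < ε := by positivity
  set a : ℝ := 8 * δ / (9 * C0) * ν ^ d with hadef
  have ha0 : 0 < a := by positivity
  set ρ : ℝ := a ^ ((1:ℝ) / ((j:ℝ) + 1)) with hρdef
  have hρ0 : 0 < ρ := Real.rpow_pos_of_pos ha0 _
  have hat0 : 0 < a ^ t := Real.rpow_pos_of_pos ha0 t
  have hρj : ρ ^ j = a ^ t := by
    rw [hρdef, htdef, ← Real.rpow_natCast (a ^ ((1:ℝ)/((j:ℝ)+1))) j,
      ← Real.rpow_mul ha0.le]
    congr 1
    ring
  -- basic facts about points of E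
  have hEmem : ∀ y ∈ E, |y - U.ys i| ≤ 2 * r ∧ ρ ≤ |y - U.ys i| ∧ |U.u y - lam| ≤ ε := by
    intro y hy
    rw [hE] at hy
    obtain ⟨hyIoc, hξy, hyu⟩ := hy
    have h2r : |y - U.ys i| ≤ 2 * r := by
      by_contra h
      exact hξy (hξsupp y hyIoc (lt_of_not_ge h))
    refine ⟨h2r, ?_, hyu⟩
    have hlow : 8 * δ / 9 * ν ^ d ≤ |U.u y - U.u (U.ys i)| := by
      have h1 := abs_sub_le lam (U.u y) (U.u (U.ys i))
      rw [abs_sub_comm lam (U.u y)] at h1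
      have e1 : 8 * δ / 9 * ν ^ d = δ * ν ^ d - δ / 9 * ν ^ d := by ring
      rw [hεdef] at hyu
      linarith [hlam]
    have hup := (hu_loc y hyIoc h2r).2
    have ha_le : a ≤ |y - U.ys i| ^ (j + 1) := by
      have h2 : 8 * δ / 9 * ν ^ d ≤ C0 * |y - U.ys i| ^ (j + 1) := hlow.trans hup
      rw [hadef, div_mul_eq_mul_div, div_le_iff₀ (by positivity : (0:ℝ) < 9 * C0)]
      have e2 : 8 * δ * ν ^ d = 9 * (8 * δ / 9 * ν ^ d) := by ring
      rw [e2]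
      nlinarith [h2, hC0pos, pow_nonneg (abs_nonneg (y - U.ys i)) (j + 1)]
    calc ρ = a ^ ((1:ℝ)/((j:ℝ)+1)) := hρdef
      _ ≤ (|y - U.ys i| ^ (j + 1)) ^ ((1:ℝ)/((j:ℝ)+1)) :=
          Real.rpow_le_rpow ha0.le ha_le (by positivity)
      _ = |y - U.ys i| := by
          rw [← Real.rpow_natCast |y - U.ys i| (j + 1), ← Real.rpow_mul (abs_nonneg _)]
          push_cast
          rw [mul_one_div, div_self hj1pos.ne', Real.rpow_one]
  -- derivative lower bound
  have hderiv : ∀ c : ℝ, ρ ≤ |c - U.ys i| → |c - U.ys i| ≤ 2 * r →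
      U.C1⁻¹ * a ^ t ≤ |deriv U.u c| := by
    intro c h1 h2
    have hball : c ∈ Metric.ball (U.ys i) (U.R i) := by
      rw [Metric.mem_ball, Real.dist_eq]
      calc |c - U.ys i| ≤ 2 * r := h2
        _ < U.R i := by linarith
    have hdl := U.deriv_lower i c hball
    rw [← hjdef] at hdl
    refine le_trans ?_ hdl
    rw [← hρj]
    exact mul_le_mul_of_nonneg_left (pow_le_pow_left₀ hρ0.le h1 j)
      (inv_nonneg.mpr hC1pos.le)
  -- diameter bound
  set B : ℝ := 2 * U.C1 * ε / a ^ t with hBdef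
  have hB0 : 0 < B := by positivity
  have hdiffu : Differentiable ℝ U.u := U.smooth.differentiable (by simp)
  have hdiam : ∀ y1 ∈ E, ∀ y2 ∈ E, y1 ≤ y2 → (U.ys i < y1 ∨ y2 < U.ys i) →
      y2 - y1 ≤ B := by
    intro y1 h1 y2 h2 hle hsd
    obtain ⟨h1r, h1ρ, h1u⟩ := hEmem y1 h1
    obtain ⟨h2r, h2ρ, h2u⟩ := hEmem y2 h2
    rcases eq_or_lt_of_le hle with rfl | hlt
    · linarith
    · have hcont : ContinuousOn U.u (Set.Icc y1 y2) := hdiffu.continuous.continuousOn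
      have hdo : DifferentiableOn ℝ U.u (Set.Ioo y1 y2) := hdiffu.differentiableOn
      obtain ⟨c, hc, hcd⟩ := exists_deriv_eq_slope U.u hlt hcont hdo
      have hcρ : ρ ≤ |c - U.ys i| ∧ |c - U.ys i| ≤ 2 * r := by
        rcases hsd with hs | hs
        · have hcy : U.ys i < c := lt_trans hs hc.1
          rw [abs_of_pos (by linarith : (0:ℝ) < c - U.ys i)]
          constructor
          · calc ρ ≤ |y1 - U.ys i| := h1ρ
              _ = y1 - U.ys i := abs_of_pos (by linarith)
              _ ≤ c - U.ys i := by linarith [hc.1]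
          · calc c - U.ys i ≤ y2 - U.ys i := by linarith [hc.2]
              _ ≤ |y2 - U.ys i| := le_abs_self _
              _ ≤ 2 * r := h2r
        · have hcy : c < U.ys i := lt_trans hc.2 hs
          rw [abs_of_neg (by linarith : c - U.ys i < 0)]
          constructor
          · calc ρ ≤ |y2 - U.ys i| := h2ρ
              _ = -(y2 - U.ys i) := abs_of_neg (by linarith)
              _ ≤ -(c - U.ys i) := by linarith [hc.2]
          · calc -(c - U.ys i) ≤ -(y1 - U.ys i) := by linarith [hc.1]
              _ ≤ |y1 - U.ys i| := neg_le_abs _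
              _ ≤ 2 * r := h1r
      have hdc : U.C1⁻¹ * a ^ t ≤ |deriv U.u c| := hderiv c hcρ.1 hcρ.2
      have huu : |U.u y2 - U.u y1| ≤ 2 * ε := by
        have h3 := abs_sub_le (U.u y2) lam (U.u y1)
        rw [abs_sub_comm lam (U.u y1)] at h3
        linarith
      have hslope : |deriv U.u c| * (y2 - y1) = |U.u y2 - U.u y1| := by
        rw [hcd, abs_div, abs_of_pos (by linarith : (0:ℝ) < y2 - y1)]
        exact div_mul_cancel₀ _ (by linarith : y2 - y1 ≠ 0)
      have hkey : U.C1⁻¹ * a ^ t * (y2 - y1) ≤ 2 * ε := by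
        calc U.C1⁻¹ * a ^ t * (y2 - y1) ≤ |deriv U.u c| * (y2 - y1) :=
              mul_le_mul_of_nonneg_right hdc (by linarith)
          _ = |U.u y2 - U.u y1| := hslope
          _ ≤ 2 * ε := huu
      rw [hBdef, le_div_iff₀ hat0]
      have h4 := mul_le_mul_of_nonneg_left hkey hC1pos.le
      have h5 : a ^ t * (y2 - y1) ≤ U.C1 * (2 * ε) := by
        calc a ^ t * (y2 - y1) = U.C1 * (U.C1⁻¹ * a ^ t * (y2 - y1)) := by
              rw [← mul_assoc, ← mul_assoc, mul_inv_cancel₀ hC1pos.ne', one_mul]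
          _ ≤ U.C1 * (2 * ε) := h4
      linarith
  -- the critical point is not in E
  have hys_not : U.ys i ∉ E := by
    intro hy
    rw [hE] at hy
    obtain ⟨-, -, hyu⟩ := hy
    rw [abs_sub_comm] at hyu
    have h6 : δ * ν ^ d ≤ δ / 9 * ν ^ d := le_trans hlam hyu
    nlinarith [mul_pos hδ0 hνd]
  -- measure bound on each side
  have hsides : ∀ S : Set ℝ, S ⊆ E → (∀ y1 ∈ S, ∀ y2 ∈ S, y1 ≤ y2 → y2 - y1 ≤ B) →
      volume S ≤ ENNReal.ofReal (2 * B) := by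
    intro S hSE hS
    rcases Set.eq_empty_or_nonempty S with rfl | ⟨y0, hy0⟩
    · simp
    · have hsub : S ⊆ Set.Icc (y0 - B) (y0 + B) := by
        intro y hy
        rcases le_total y y0 with h | h
        · have := hS y hy y0 hy0 h; exact ⟨by linarith, by linarith⟩
        · have := hS y0 hy0 y hy h; exact ⟨by linarith, by linarith⟩
      calc volume S ≤ volume (Set.Icc (y0 - B) (y0 + B)) := measure_mono hsub
        _ = ENNReal.ofReal (y0 + B - (y0 - B)) := Real.volume_Icc
        _ = ENNReal.ofReal (2 * B) := by congr 1; ring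
  have hEsub : E ⊆ (E ∩ Set.Ioi (U.ys i)) ∪ (E ∩ Set.Iio (U.ys i)) := by
    intro y hy
    rcases lt_trichotomy y (U.ys i) with h | h | h
    · exact Or.inr ⟨hy, h⟩
    · exact absurd (h ▸ hy) hys_not
    · exact Or.inl ⟨hy, h⟩
  have hvol : volume E ≤ ENNReal.ofReal (4 * B) := by
    calc volume E ≤ volume ((E ∩ Set.Ioi (U.ys i)) ∪ (E ∩ Set.Iio (U.ys i))) :=
          measure_mono hEsub
      _ ≤ volume (E ∩ Set.Ioi (U.ys i)) + volume (E ∩ Set.Iio (U.ys i)) :=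
          measure_union_le _ _
      _ ≤ ENNReal.ofReal (2 * B) + ENNReal.ofReal (2 * B) := by
          refine add_le_add (hsides _ Set.inter_subset_left ?_)
            (hsides _ Set.inter_subset_left ?_)
          · intro y1 hy1 y2 hy2 hle
            exact hdiam y1 hy1.1 y2 hy2.1 hle (Or.inl hy1.2)
          · intro y1 hy1 y2 hy2 hle
            exact hdiam y1 hy1.1 y2 hy2.1 hle (Or.inr hy2.2)
      _ = ENNReal.ofReal (4 * B) := by
          rw [← ENNReal.ofReal_add (by positivity) (by positivity)]
          congr 1; ring
  have hvolR : (volume E).toReal ≤ 4 * B :=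
    ENNReal.toReal_le_of_le_ofReal (by positivity) hvol
  -- rpow algebra
  have hat : a ^ t = (8 / (9 * C0)) ^ t * δ ^ t * (ν ^ d) ^ t := by
    rw [hadef, show 8 * δ / (9 * C0) * ν ^ d = (8 / (9 * C0)) * δ * ν ^ d by ring,
      Real.mul_rpow (by positivity) hνd.le, Real.mul_rpow (by positivity) hδ0.le]
  have h8K : ((8 : ℝ) / (9 * C0)) ^ t = K⁻¹ := by
    rw [hKdef, ← Real.inv_rpow (by positivity : (0:ℝ) ≤ 9 * C0 / 8)]
    congr 1
    rw [inv_div]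
  have hνdt : (ν ^ d) ^ t = ν ^ ((j:ℝ) / ((j:ℝ) + 1 + 2 * γ)) := by
    rw [← Real.rpow_mul hν0.le]
    congr 1
    rw [hdeq, htdef]
    field_simp
  have h1t : t + 1 / ((j:ℝ) + 1) = 1 := by
    rw [htdef]; field_simp
  have hδsplit : δ ^ t * δ ^ ((1:ℝ) / ((j:ℝ) + 1)) = δ := by
    rw [← Real.rpow_add hδ0, h1t, Real.rpow_one]
  have hνsplit : ν ^ ((j:ℝ) / ((j:ℝ) + 1 + 2 * γ)) * ν ^ ((1:ℝ) / ((j:ℝ) + 1 + 2 * γ))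
      = ν ^ d := by
    rw [← Real.rpow_add hν0, hdeq]
    congr 1
    field_simp
  constructor
  · -- (i) measure estimate
    refine hvolR.trans ?_
    have h4B : 4 * B = 8 * U.C1 * ε / a ^ t := by rw [hBdef]; ring
    rw [h4B, div_le_iff₀ hat0]
    have key1 : 8 * U.C1 * K * δ ^ ((1:ℝ)/((j:ℝ)+1)) * ν ^ ((1:ℝ)/((j:ℝ)+1+2*γ)) * a ^ t
        = 8 * U.C1 * (δ * ν ^ d) := by
      rw [hat, h8K, hνdt]
      calc 8 * U.C1 * K * δ ^ ((1:ℝ)/((j:ℝ)+1)) * ν ^ ((1:ℝ)/((j:ℝ)+1+2*γ)) *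
            (K⁻¹ * δ ^ t * ν ^ ((j:ℝ)/((j:ℝ)+1+2*γ)))
          = 8 * U.C1 * (K * K⁻¹) * (δ ^ t * δ ^ ((1:ℝ)/((j:ℝ)+1))) *
            (ν ^ ((j:ℝ)/((j:ℝ)+1+2*γ)) * ν ^ ((1:ℝ)/((j:ℝ)+1+2*γ))) := by ring
        _ = 8 * U.C1 * (δ * ν ^ d) := by
            rw [mul_inv_cancel₀ hKpos.ne', hδsplit, hνsplit]; ring
    rw [key1, hεdef]
    nlinarith [mul_pos hδ0 hνd, hC1pos, mul_pos hC1pos (mul_pos hδ0 hνd)]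
  · -- (ii) derivative lower bound
    intro y hy
    obtain ⟨h2r, hρy, -⟩ := hEmem y hy
    refine le_trans ?_ (hderiv y hρy h2r)
    rw [hat, h8K, hνdt]
    have hδt : 0 < δ ^ t := Real.rpow_pos_of_pos hδ0 _
    have hνe : 0 < ν ^ ((j:ℝ) / ((j:ℝ) + 1 + 2 * γ)) := Real.rpow_pos_of_pos hν0 _
    have hinv : (8 * U.C1 * K)⁻¹ ≤ U.C1⁻¹ * K⁻¹ := by
      rw [← mul_inv]
      apply inv_anti₀ (by positivity)
      nlinarith [mul_pos hC1pos hKpos]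
    calc (8 * U.C1 * K)⁻¹ * δ ^ t * ν ^ ((j:ℝ)/((j:ℝ)+1+2*γ))
        ≤ (U.C1⁻¹ * K⁻¹) * δ ^ t * ν ^ ((j:ℝ)/((j:ℝ)+1+2*γ)) :=
          mul_le_mul_of_nonneg_right (mul_le_mul_of_nonneg_right hinv hδt.le) hνe.le
      _ = U.C1⁻¹ * (K⁻¹ * δ ^ t * ν ^ ((j:ℝ)/((j:ℝ)+1+2*γ))) := by ring
end
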